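/- arXiv:2508.20008 — 3 statements merged into one kernel-verified Lean document; each statement's English description precedes it below -/
import Mathlib

section
/- Let H be a positive analytic system. Let z ≥ 0 and A, B ∈ ℝ^m with 0 ≤ B ≤ A componentwise, and suppose (z,A) ∈ D(H) (hence also (z,B) ∈ D(H)). Then, componentwise and in [0,+∞] (with the convention ∞·0 = 0, the Jacobian entries being the sums in [0,+∞] of the termwise-differentiated series), ∂H/∂Y(z,B)·(A−B) ≤ H(z,A) − H(z,B) ≤ ∂H/∂Y(z,A)·(A−B). -/
open scoped ENNReal NNReal Topology
open Filter

namespace AnalyticComb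

/-- A positive analytic system in dimension `m`: nonnegative real coefficients indexed by
multi-indices in `ℕ^{m+1}`. -/
structure PosSystem (m : ℕ) where
  c : Fin m → (Fin (m + 1) → ℕ) → ℝ
  nonneg : ∀ i d, 0 ≤ c i d

variable {m : ℕ}

/-- The point `(z, Y) ∈ ℝ^{m+1}`. -/
def vec (z : ℝ) (Y : Fin m → ℝ) : Fin (m + 1) → ℝ := Fin.cons z Y

/-- General term of the series defining `H_i` at `x`. -/
def term (S : PosSystem m) (i : Fin m) (x : Fin (m + 1) → ℝ) (d : Fin (m + 1) → ℕ) : ℝ :=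
  S.c i d * ∏ j, x j ^ d j

/-- `x` belongs to the domain of convergence `D(H)`: all `m` series converge absolutely. -/
def ConvAt (S : PosSystem m) (x : Fin (m + 1) → ℝ) : Prop :=
  ∀ i, Summable fun d => |term S i x d|

/-- The value `H(x) ∈ ℝ^m`. -/
noncomputable def Hval (S : PosSystem m) (x : Fin (m + 1) → ℝ) : Fin m → ℝ :=
  fun i => ∑' d, term S i x d

/-- General term of the termwise-differentiated series `∂H_i/∂Y_j` at `x`. -/
def jacTerm (S : PosSystem m) (i j : Fin m) (x : Fin (m + 1) → ℝ)
    (d : Fin (m + 1) → ℕ) : ℝ :=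
  S.c i d * (d j.succ : ℝ) * ∏ k, x k ^ (if k = j.succ then d k - 1 else d k)

/-- Absolute convergence of all entries of the Jacobian `∂H/∂Y` at `x`. -/
def JacConvAt (S : PosSystem m) (x : Fin (m + 1) → ℝ) : Prop :=
  ∀ i j, Summable fun d => |jacTerm S i j x d|

/-- The Jacobian matrix `∂H/∂Y(x)`. -/
noncomputable def jac (S : PosSystem m) (x : Fin (m + 1) → ℝ) : Matrix (Fin m) (Fin m) ℝ :=
  Matrix.of fun i j => ∑' d, jacTerm S i j x d

/-- Entries of the Jacobian, as sums in `[0,+∞]` (convention `∞·0 = 0`). -/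
noncomputable def jacEnn (S : PosSystem m) (x : Fin (m + 1) → ℝ) (i j : Fin m) : ℝ≥0∞ :=
  ∑' d, ENNReal.ofReal (jacTerm S i j x d)

/-- General term of the termwise twice-differentiated series `∂²H_l/∂Y_i∂Y_j` at `x`. -/
def jac2Term (S : PosSystem m) (l i j : Fin m) (x : Fin (m + 1) → ℝ)
    (d : Fin (m + 1) → ℕ) : ℝ :=
  S.c l d * (d i.succ : ℝ) * ((d j.succ - if i = j then 1 else 0 : ℕ) : ℝ) *
    ∏ k, x k ^ (d k - (if k = i.succ then 1 else 0) - (if k = j.succ then 1 else 0))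

/-- The value of `∂²H_l/∂Y_i∂Y_j` at `x`. -/
noncomputable def jac2 (S : PosSystem m) (l i j : Fin m) (x : Fin (m + 1) → ℝ) : ℝ :=
  ∑' d, jac2Term S l i j x d

/-- Spectral radius: largest modulus of a complex eigenvalue of a real matrix. -/
noncomputable def specRad {n : Type*} [Fintype n] [DecidableEq n] (A : Matrix n n ℝ) : ℝ≥0∞ :=
  spectralRadius ℂ (A.map Complex.ofReal)

/-- `Λ_H(x)`: spectral radius of the Jacobian matrix at `x`. -/
noncomputable def lambda (S : PosSystem m) (x : Fin (m + 1) → ℝ) : ℝ≥0∞ :=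
  specRad (jac S x)

/-- The iterates `U^{[k]}` (`U^{[0]} = 0`, `U^{[k+1]} = H(0, U^{[k]})`). -/
noncomputable def uIter (S : PosSystem m) : ℕ → Fin m → ℝ
  | 0 => 0
  | k + 1 => Hval S (vec 0 (uIter S k))

/-- The system is well founded. -/
def IsWF (S : PosSystem m) : Prop :=
  (∀ k ≤ m, ConvAt S (vec 0 (uIter S k))) ∧
    JacConvAt S (vec 0 (uIter S m)) ∧
    IsNilpotent (jac S (vec 0 (uIter S m)))

/-- The system is linear: no coefficient with total `Y`-degree at least `2`. -/
def IsLinear (S : PosSystem m) : Prop :=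
  ∀ i d, 2 ≤ ∑ j : Fin m, d j.succ → S.c i d = 0

/-- `∂H_i/∂Y_j` is not identically zero on `D(H)`. -/
def DependsOn (S : PosSystem m) (i j : Fin m) : Prop :=
  ∃ x : Fin (m + 1) → ℝ, ConvAt S x ∧ (Summable fun d => |jacTerm S i j x d|) ∧
    jac S x i j ≠ 0

/-- For every pair `(i,j)` there is a chain `i = i₀, …, i_k = j`, `k ≥ 1`, of nonvanishing
partial derivatives. -/
def StronglyConnected (S : PosSystem m) : Prop :=
  ∀ i j : Fin m, ∃ k : ℕ, 1 ≤ k ∧ ∃ p : Fin (k + 1) → Fin m,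
    p 0 = i ∧ p (Fin.last k) = j ∧ ∀ t : Fin k, DependsOn S (p t.castSucc) (p t.succ)

/-- Radius of convergence of a real power series given by its coefficients. -/
noncomputable def radius (a : ℕ → ℝ) : ℝ≥0∞ :=
  ⨆ (r : ℝ≥0) (_ : Summable fun n => |a n| * (r : ℝ) ^ n), (r : ℝ≥0∞)

/-- Evaluation of a vector of power series at a real point. -/
noncomputable def eval (y : Fin m → ℕ → ℝ) (x : ℝ) : Fin m → ℝ :=
  fun i => ∑' n, y i n * x ^ n

/-- Convergence of all the coordinate power series at `x`. -/
def EvalConv (y : Fin m → ℕ → ℝ) (x : ℝ) : Prop :=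
  ∀ i, Summable fun n => y i n * x ^ n

/-- A generating function solution of a (well-founded) system. -/
structure GFSol (S : PosSystem m) where
  y : Fin m → ℕ → ℝ
  nonneg : ∀ i n, 0 ≤ y i n
  rad_pos : 0 < ⨅ i, radius (y i)
  init : eval y 0 = uIter S m
  conv : ∀ x : ℝ, 0 ≤ x → ENNReal.ofReal x < ⨅ i, radius (y i) →
    ConvAt S (vec x (eval y x))
  fixed : ∀ x : ℝ, 0 ≤ x → ENNReal.ofReal x < ⨅ i, radius (y i) →
    eval y x = Hval S (vec x (eval y x))

/-- The radius of convergence `ρ` of the solution. -/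
noncomputable def GFSol.rad {S : PosSystem m} (sol : GFSol S) : ℝ≥0∞ :=
  ⨅ i, radius (sol.y i)

/-- The system is zero-free: no coordinate of the solution is the zero power series. -/
def GFSol.ZeroFree {S : PosSystem m} (sol : GFSol S) : Prop :=
  ∀ i, ∃ n, sol.y i n ≠ 0

/-- The system is irreducible. -/
def GFSol.Irreducible {S : PosSystem m} (sol : GFSol S) : Prop :=
  IsWF S ∧ sol.ZeroFree ∧ StronglyConnected S

/-- `τ_i = lim_{x→ρ⁻} Y_i(x) ∈ [0,+∞]`, as a monotone supremum. -/
noncomputable def GFSol.tau {S : PosSystem m} (sol : GFSol S) (i : Fin m) : ℝ≥0∞ :=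
  ⨆ (x : ℝ) (_ : 0 ≤ x) (_ : ENNReal.ofReal x < sol.rad), ENNReal.ofReal (eval sol.y x i)

/-- The Newton iterates at `a`. -/
noncomputable def newton (S : PosSystem m) (a : ℝ) : ℕ → Fin m → ℝ
  | 0 => 0
  | n + 1 =>
      newton S a n +
        ((1 - jac S (vec a (newton S a n)))⁻¹).mulVec
          (Hval S (vec a (newton S a n)) - newton S a n)

/-- The Newton step at `y^{[k]}` is legitimate, so that `y^{[k+1]}` is defined. -/
def NewtonStepOK (S : PosSystem m) (a : ℝ) (k : ℕ) : Prop :=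
  ConvAt S (vec a (newton S a k)) ∧ JacConvAt S (vec a (newton S a k)) ∧
    IsUnit (1 - jac S (vec a (newton S a k))).det

/-- The characteristic map `F(z,Y) = (Y − H(z,Y), det(I − ∂H/∂Y(z,Y)))`. -/
noncomputable def fchar (S : PosSystem m) (x : Fin (m + 1) → ℝ) : Fin (m + 1) → ℝ :=
  Fin.snoc (fun i : Fin m => x i.succ - Hval S x i) ((1 - jac S x).det)

/-- The Jacobian matrix of the characteristic map. -/
noncomputable def jchar (S : PosSystem m) (x : Fin (m + 1) → ℝ) :
    Matrix (Fin (m + 1)) (Fin (m + 1)) ℝ :=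
  Matrix.of fun i j => fderiv ℝ (fchar S) x (Pi.single j (1 : ℝ)) i

/-- The map `F(z,Y) = (Y − H(z,Y), Y₁ − 1)`. -/
noncomputable def fone (S : PosSystem m) (x : Fin (m + 1) → ℝ) : Fin (m + 1) → ℝ :=
  Fin.snoc (fun i : Fin m => x i.succ - Hval S x i) (x 1 - 1)

/-- The Jacobian matrix of `fone`. -/
noncomputable def jone (S : PosSystem m) (x : Fin (m + 1) → ℝ) :
    Matrix (Fin (m + 1)) (Fin (m + 1)) ℝ :=
  Matrix.of fun i j => fderiv ℝ (fone S) x (Pi.single j (1 : ℝ)) i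

/-- Term of the Jacobian entries at a complex point. -/
def jacTermC (S : PosSystem m) (i j : Fin m) (x : Fin (m + 1) → ℂ)
    (d : Fin (m + 1) → ℕ) : ℂ :=
  (S.c i d : ℂ) * (d j.succ : ℂ) * ∏ k, x k ^ (if k = j.succ then d k - 1 else d k)

/-- The Jacobian matrix at a complex point. -/
noncomputable def jacC (S : PosSystem m) (x : Fin (m + 1) → ℂ) : Matrix (Fin m) (Fin m) ℂ :=
  Matrix.of fun i j => ∑' d, jacTermC S i j x d

/-- Evaluation of the solution at a complex point. -/
noncomputable def evalC (y : Fin m → ℕ → ℝ) (w : ℂ) : Fin m → ℂ :=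
  fun i => ∑' n, (y i n : ℂ) * w ^ n

/-- `α` (on the circle `|w| = ρ`) is a singularity of the solution: some coordinate admits
no analytic continuation to a neighborhood of `α`. -/
def IsSingularity {S : PosSystem m} (sol : GFSol S) (ρ : ℝ) (α : ℂ) : Prop :=
  ∃ i : Fin m, ¬ ∃ (U : Set ℂ) (g : ℂ → ℂ), IsOpen U ∧ α ∈ U ∧
    (∀ w ∈ U, AnalyticAt ℂ g w) ∧ ∀ w ∈ U ∩ Metric.ball (0 : ℂ) ρ, g w = evalC sol.y w i

/-- `q` is the period of the power series with coefficient sequence `a`: the differences of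
elements of the support generate the subgroup `qℤ` of `ℤ`. -/
def HasPeriod (a : ℕ → ℝ) (q : ℕ) : Prop :=
  (∀ n n' : ℕ, a n ≠ 0 → a n' ≠ 0 → (q : ℤ) ∣ (n : ℤ) - (n' : ℤ)) ∧
    ∀ q' : ℕ, (∀ n n' : ℕ, a n ≠ 0 → a n' ≠ 0 → (q' : ℤ) ∣ (n : ℤ) - (n' : ℤ)) → q' ∣ q

/-- Valuation: index of the first nonzero coefficient. -/
noncomputable def sVal (a : ℕ → ℝ) : ℕ := sInf {n | a n ≠ 0}

section AuxConvex
open Finset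

/-- One-variable bound: `n u^{n-1}(v-u) ≤ v^n - u^n ≤ n v^{n-1}(v-u)` for `0 ≤ u ≤ v`. -/
lemma pow_sub_pow_bounds {u v : ℝ} (hu : 0 ≤ u) (huv : u ≤ v) (n : ℕ) :
    (n : ℝ) * u ^ (n - 1) * (v - u) ≤ v ^ n - u ^ n ∧
    v ^ n - u ^ n ≤ (n : ℝ) * v ^ (n - 1) * (v - u) := by
  have hv : 0 ≤ v := hu.trans huv
  have key : (∑ i ∈ range n, v ^ i * u ^ (n - 1 - i)) * (v - u) = v ^ n - u ^ n :=
    geom_sum₂_mul v u n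
  have hlow : ∀ i ∈ range n, u ^ (n - 1) ≤ v ^ i * u ^ (n - 1 - i) := by
    intro i hi
    rw [mem_range] at hi
    have : u ^ (n - 1) = u ^ i * u ^ (n - 1 - i) := by
      rw [← pow_add]
      congr 1
      omega
    rw [this]
    exact mul_le_mul_of_nonneg_right (pow_le_pow_left₀ hu huv i) (pow_nonneg hu _)
  have hhigh : ∀ i ∈ range n, v ^ i * u ^ (n - 1 - i) ≤ v ^ (n - 1) := by
    intro i hi
    rw [mem_range] at hi
    have : v ^ (n - 1) = v ^ i * v ^ (n - 1 - i) := by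
      rw [← pow_add]; congr 1; omega
    rw [this]
    exact mul_le_mul_of_nonneg_left (pow_le_pow_left₀ hu huv _) (pow_nonneg hv _)
  have h1 : (n : ℝ) * u ^ (n - 1) ≤ ∑ i ∈ range n, v ^ i * u ^ (n - 1 - i) := by
    have := Finset.card_nsmul_le_sum (range n) _ _ hlow
    simpa [nsmul_eq_mul] using this
  have h2 : (∑ i ∈ range n, v ^ i * u ^ (n - 1 - i)) ≤ (n : ℝ) * v ^ (n - 1) := by
    have := Finset.sum_le_card_nsmul (range n) _ _ hhigh
    simpa [nsmul_eq_mul] using this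
  have hvu : 0 ≤ v - u := sub_nonneg.2 huv
  constructor
  · rw [← key]; exact mul_le_mul_of_nonneg_right h1 hvu
  · rw [← key]; exact mul_le_mul_of_nonneg_right h2 hvu

/-- Multivariate convexity bounds for a monomial on a finset. -/
lemma prod_sub_prod_bounds {ι : Type*} [DecidableEq ι] (u v : ι → ℝ) (d : ι → ℕ)
    (hu : ∀ k, 0 ≤ u k) (huv : ∀ k, u k ≤ v k) (s : Finset ι) :
    (∑ k ∈ s, (d k : ℝ) * u k ^ (d k - 1) * (∏ l ∈ s.erase k, u l ^ d l) * (v k - u k)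
        ≤ ∏ k ∈ s, v k ^ d k - ∏ k ∈ s, u k ^ d k) ∧
    (∏ k ∈ s, v k ^ d k - ∏ k ∈ s, u k ^ d k
        ≤ ∑ k ∈ s, (d k : ℝ) * v k ^ (d k - 1) * (∏ l ∈ s.erase k, v l ^ d l) * (v k - u k)) := by
  have hv : ∀ k, 0 ≤ v k := fun k => (hu k).trans (huv k)
  induction s using Finset.induction with
  | empty => simp
  | insert a s ha ih =>
    obtain ⟨ih1, ih2⟩ := ih
    set Pu := ∏ k ∈ s, u k ^ d k with hPu
    set Pv := ∏ k ∈ s, v k ^ d k with hPv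
    have hPu0 : 0 ≤ Pu := Finset.prod_nonneg fun k _ => pow_nonneg (hu k) _
    have hPv0 : 0 ≤ Pv := Finset.prod_nonneg fun k _ => pow_nonneg (hv k) _
    have hPuv : Pu ≤ Pv :=
      Finset.prod_le_prod (fun k _ => pow_nonneg (hu k) _)
        (fun k _ => pow_le_pow_left₀ (hu k) (huv k) _)
    have h1var := pow_sub_pow_bounds (hu a) (huv a) (d a)
    have hvu : 0 ≤ v a - u a := sub_nonneg.2 (huv a)
    have hua : 0 ≤ u a ^ d a := pow_nonneg (hu a) _
    have hva : 0 ≤ v a ^ d a := pow_nonneg (hv a) _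
    have huva : u a ^ d a ≤ v a ^ d a := pow_le_pow_left₀ (hu a) (huv a) _
    -- rewrite erase-products in sums over s
    have heraseU : ∀ k ∈ s, (d k : ℝ) * u k ^ (d k - 1) *
        (∏ l ∈ (insert a s).erase k, u l ^ d l) * (v k - u k)
        = u a ^ d a * ((d k : ℝ) * u k ^ (d k - 1) * (∏ l ∈ s.erase k, u l ^ d l) * (v k - u k)) := by
      intro k hk
      have hak : a ≠ k := fun h => ha (h ▸ hk)
      rw [Finset.erase_insert_of_ne hak,
        Finset.prod_insert (fun h => ha (Finset.mem_of_mem_erase h))]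
      ring
    have heraseV : ∀ k ∈ s, (d k : ℝ) * v k ^ (d k - 1) *
        (∏ l ∈ (insert a s).erase k, v l ^ d l) * (v k - u k)
        = v a ^ d a * ((d k : ℝ) * v k ^ (d k - 1) * (∏ l ∈ s.erase k, v l ^ d l) * (v k - u k)) := by
      intro k hk
      have hak : a ≠ k := fun h => ha (h ▸ hk)
      rw [Finset.erase_insert_of_ne hak,
        Finset.prod_insert (fun h => ha (Finset.mem_of_mem_erase h))]
      ring
    rw [Finset.prod_insert ha, Finset.prod_insert ha, Finset.sum_insert ha,
      Finset.sum_insert ha, Finset.erase_insert ha,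
      Finset.sum_congr rfl heraseU, Finset.sum_congr rfl heraseV,
      ← Finset.mul_sum, ← Finset.mul_sum, ← hPu, ← hPv]
    constructor
    · -- lower bound
      have e1 : u a ^ d a * (∑ k ∈ s, (d k : ℝ) * u k ^ (d k - 1) * (∏ l ∈ s.erase k, u l ^ d l) * (v k - u k))
          ≤ u a ^ d a * (Pv - Pu) := mul_le_mul_of_nonneg_left ih1 hua
      have e2 : u a ^ d a * (Pv - Pu) ≤ v a ^ d a * (Pv - Pu) :=
        mul_le_mul_of_nonneg_right huva (sub_nonneg.2 hPuv)
      have e3 : (d a : ℝ) * u a ^ (d a - 1) * Pu * (v a - u a)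
          ≤ (v a ^ d a - u a ^ d a) * Pu := by
        calc (d a : ℝ) * u a ^ (d a - 1) * Pu * (v a - u a)
            = ((d a : ℝ) * u a ^ (d a - 1) * (v a - u a)) * Pu := by ring
          _ ≤ (v a ^ d a - u a ^ d a) * Pu := mul_le_mul_of_nonneg_right h1var.1 hPu0
      nlinarith [e1, e2, e3]
    · -- upper bound
      have e1 : v a ^ d a * (Pv - Pu)
          ≤ v a ^ d a * (∑ k ∈ s, (d k : ℝ) * v k ^ (d k - 1) * (∏ l ∈ s.erase k, v l ^ d l) * (v k - u k)) :=
        mul_le_mul_of_nonneg_left ih2 hva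
      have e3 : (v a ^ d a - u a ^ d a) * Pu ≤ (d a : ℝ) * v a ^ (d a - 1) * Pv * (v a - u a) := by
        calc (v a ^ d a - u a ^ d a) * Pu ≤ (v a ^ d a - u a ^ d a) * Pv :=
              mul_le_mul_of_nonneg_left hPuv (sub_nonneg.2 huva)
          _ ≤ ((d a : ℝ) * v a ^ (d a - 1) * (v a - u a)) * Pv :=
              mul_le_mul_of_nonneg_right h1var.2 hPv0
          _ = (d a : ℝ) * v a ^ (d a - 1) * Pv * (v a - u a) := by ring
      nlinarith [e1, e3]

end AuxConvex

/-- Convexity inequalities: for `0 ≤ B ≤ A` with `(z,A) ∈ D(H)`,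
`∂H/∂Y(z,B)·(A−B) ≤ H(z,A) − H(z,B) ≤ ∂H/∂Y(z,A)·(A−B)` componentwise in `[0,+∞]`. -/
theorem statement1 (m : ℕ) (hm : 1 ≤ m) (S : PosSystem m) (z : ℝ) (hz : 0 ≤ z)
    (A B : Fin m → ℝ) (hB : ∀ j, 0 ≤ B j) (hBA : ∀ j, B j ≤ A j)
    (hA : ConvAt S (vec z A)) :
    ∀ i, (∑ j, jacEnn S (vec z B) i j * ENNReal.ofReal (A j - B j))
          ≤ ENNReal.ofReal (Hval S (vec z A) i - Hval S (vec z B) i) ∧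
        ENNReal.ofReal (Hval S (vec z A) i - Hval S (vec z B) i)
          ≤ ∑ j, jacEnn S (vec z A) i j * ENNReal.ofReal (A j - B j) := by

  classical
  set u := vec z B with hu_def
  set v := vec z A with hv_def
  have hu0 : ∀ k, 0 ≤ u k := fun k => by
    refine Fin.cases ?_ ?_ k
    · simpa [hu_def, vec] using hz
    · intro j; simpa [hu_def, vec] using hB j
  have huv : ∀ k, u k ≤ v k := fun k => by
    refine Fin.cases ?_ ?_ k
    · simp [hu_def, hv_def, vec]
    · intro j; simpa [hu_def, hv_def, vec] using hBA j
  have hv0 : ∀ k, 0 ≤ v k := fun k => (hu0 k).trans (huv k)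
  have huv0 : u 0 = v 0 := by simp [hu_def, hv_def, vec]
  have hdj : ∀ j : Fin m, A j - B j = v j.succ - u j.succ := by
    intro j; simp [hu_def, hv_def, vec]
  have hdj0 : ∀ j : Fin m, 0 ≤ A j - B j := fun j => sub_nonneg.2 (hBA j)
  intro i
  -- nonnegativity of terms
  have htermv : ∀ d, 0 ≤ term S i v d := fun d =>
    mul_nonneg (S.nonneg i d) (Finset.prod_nonneg fun k _ => pow_nonneg (hv0 k) _)
  have htermu : ∀ d, 0 ≤ term S i u d := fun d =>
    mul_nonneg (S.nonneg i d) (Finset.prod_nonneg fun k _ => pow_nonneg (hu0 k) _)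
  have hle : ∀ d, term S i u d ≤ term S i v d := fun d =>
    mul_le_mul_of_nonneg_left
      (Finset.prod_le_prod (fun k _ => pow_nonneg (hu0 k) _)
        (fun k _ => pow_le_pow_left₀ (hu0 k) (huv k) _)) (S.nonneg i d)
  have sumv : Summable (term S i v) := by
    refine Summable.of_abs ?_
    exact hA i
  have sumu : Summable (term S i u) :=
    Summable.of_nonneg_of_le htermu hle sumv
  have hjt : ∀ (x : Fin (m + 1) → ℝ), (∀ k, 0 ≤ x k) → ∀ (j : Fin m) d,
      0 ≤ jacTerm S i j x d := fun x hx j d =>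
    mul_nonneg (mul_nonneg (S.nonneg i d) (Nat.cast_nonneg _))
      (Finset.prod_nonneg fun k _ => pow_nonneg (hx k) _)
  -- rewrite the jacobian term using an erase-product
  have hjac : ∀ (x : Fin (m + 1) → ℝ) (j : Fin m) (d : Fin (m + 1) → ℕ),
      jacTerm S i j x d = S.c i d *
        ((d j.succ : ℝ) * x j.succ ^ (d j.succ - 1) *
          ∏ l ∈ Finset.univ.erase j.succ, x l ^ d l) := by
    intro x j d
    rw [jacTerm, ← Finset.mul_prod_erase Finset.univ _ (Finset.mem_univ j.succ),
      if_pos rfl,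
      Finset.prod_congr rfl (fun l hl => by
        rw [if_neg (Finset.ne_of_mem_erase hl)])]
    ring
  -- the key real inequality, term by term
  have hmain : ∀ d : Fin (m + 1) → ℕ,
      (∑ j, jacTerm S i j u d * (A j - B j) ≤ term S i v d - term S i u d) ∧
      (term S i v d - term S i u d ≤ ∑ j, jacTerm S i j v d * (A j - B j)) := by
    intro d
    obtain ⟨key1, key2⟩ := prod_sub_prod_bounds u v d hu0 huv Finset.univ
    have hc := S.nonneg i d
    have hsum_u : ∑ k : Fin (m + 1),
        (d k : ℝ) * u k ^ (d k - 1) * (∏ l ∈ Finset.univ.erase k, u l ^ d l) * (v k - u k)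
        = ∑ j : Fin m,
        (d j.succ : ℝ) * u j.succ ^ (d j.succ - 1) *
          (∏ l ∈ Finset.univ.erase j.succ, u l ^ d l) * (v j.succ - u j.succ) := by
      rw [Fin.sum_univ_succ]
      rw [huv0]; simp
    have hsum_v : ∑ k : Fin (m + 1),
        (d k : ℝ) * v k ^ (d k - 1) * (∏ l ∈ Finset.univ.erase k, v l ^ d l) * (v k - u k)
        = ∑ j : Fin m,
        (d j.succ : ℝ) * v j.succ ^ (d j.succ - 1) *
          (∏ l ∈ Finset.univ.erase j.succ, v l ^ d l) * (v j.succ - u j.succ) := by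
      rw [Fin.sum_univ_succ]
      rw [huv0]; simp
    have htd : term S i v d - term S i u d
        = S.c i d * (∏ k, v k ^ d k - ∏ k, u k ^ d k) := by
      rw [term, term]; ring
    constructor
    · calc ∑ j, jacTerm S i j u d * (A j - B j)
          = S.c i d * ∑ k : Fin (m + 1),
            (d k : ℝ) * u k ^ (d k - 1) * (∏ l ∈ Finset.univ.erase k, u l ^ d l)
              * (v k - u k) := by
            rw [hsum_u, Finset.mul_sum]
            refine Finset.sum_congr rfl fun j _ => ?_
            rw [hjac, hdj]; ring
        _ ≤ S.c i d * (∏ k, v k ^ d k - ∏ k, u k ^ d k) :=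
            mul_le_mul_of_nonneg_left key1 hc
        _ = term S i v d - term S i u d := htd.symm
    · calc term S i v d - term S i u d
          = S.c i d * (∏ k, v k ^ d k - ∏ k, u k ^ d k) := htd
        _ ≤ S.c i d * ∑ k : Fin (m + 1),
            (d k : ℝ) * v k ^ (d k - 1) * (∏ l ∈ Finset.univ.erase k, v l ^ d l)
              * (v k - u k) := mul_le_mul_of_nonneg_left key2 hc
        _ = ∑ j, jacTerm S i j v d * (A j - B j) := by
            rw [hsum_v, Finset.mul_sum]
            refine Finset.sum_congr rfl fun j _ => ?_
            rw [hjac, hdj]; ring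
  -- middle term in ℝ≥0∞
  have hmid : ENNReal.ofReal (Hval S v i - Hval S u i)
      = ∑' d, ENNReal.ofReal (term S i v d - term S i u d) := by
    have : Hval S v i - Hval S u i = ∑' d, (term S i v d - term S i u d) :=
      (Summable.tsum_sub sumv sumu).symm
    rw [this, ENNReal.ofReal_tsum_of_nonneg (fun d => sub_nonneg.2 (hle d))
      (sumv.sub sumu)]
  -- jacobian sides in ℝ≥0∞
  have hside : ∀ (x : Fin (m + 1) → ℝ), (∀ k, 0 ≤ x k) →
      ∑ j, jacEnn S x i j * ENNReal.ofReal (A j - B j)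
        = ∑' d, ∑ j, ENNReal.ofReal (jacTerm S i j x d * (A j - B j)) := by
    intro x hx
    rw [Summable.tsum_finsetSum (fun j _ => ENNReal.summable)]
    refine Finset.sum_congr rfl fun j _ => ?_
    rw [jacEnn, ← ENNReal.tsum_mul_right]
    exact tsum_congr fun d => (ENNReal.ofReal_mul (hjt x hx j d)).symm
  constructor
  · rw [hside u hu0, hmid]
    refine ENNReal.tsum_le_tsum fun d => ?_
    rw [← ENNReal.ofReal_sum_of_nonneg
      (fun j _ => mul_nonneg (hjt u hu0 j d) (hdj0 j))]
    exact ENNReal.ofReal_le_ofReal (hmain d).1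
  · rw [hside v hv0, hmid]
    refine ENNReal.tsum_le_tsum fun d => ?_
    rw [← ENNReal.ofReal_sum_of_nonneg
      (fun j _ => mul_nonneg (hjt v hv0 j d) (hdj0 j))]
    exact ENNReal.ofReal_le_ofReal (hmain d).2


end AnalyticComb
end

section
/- Let H be a well-founded positive analytic system that is zero-free, with generating function solution Y and radius of convergence ρ. If a ≥ 0 and B ∈ ℝ_{≥0}^m are such that the series defining H converge absolutely at (a,B) and B = H(a,B), then a ≤ ρ, the series Y_i converge at a, and Y(a) ≤ B componentwise. -/
open scoped ENNReal NNReal Topology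
open Filter

namespace AnalyticComb

variable {m : ℕ}

namespace S4
open PowerSeries

noncomputable def evv (f : ℕ → ℝ≥0∞) (x : ℝ≥0∞) : ℝ≥0∞ := ∑' n, f n * x ^ n

variable {ι : Type}

variable {ι : Type}

noncomputable def prodl (F : ι → PowerSeries ℝ≥0∞) (l : List ι) : PowerSeries ℝ≥0∞ := (l.map F).prod

noncomputable def pzero (F : ι → PowerSeries ℝ≥0∞) (l : List ι) : ℝ≥0∞ :=
  (l.map (fun t => coeff 0 (F t))).prod

noncomputable def esum (F G : ι → PowerSeries ℝ≥0∞) (n : ℕ) : List ι → ℝ≥0∞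
  | [] => 0
  | t :: tl => coeff n (G t) * pzero F tl + coeff 0 (F t) * esum F G n tl

@[simp] lemma prodl_nil (F : ι → PowerSeries ℝ≥0∞) : prodl F [] = 1 := rfl
@[simp] lemma prodl_cons (F : ι → PowerSeries ℝ≥0∞) (t : ι) (l : List ι) :
    prodl F (t :: l) = F t * prodl F l := by simp [prodl]
@[simp] lemma pzero_nil (F : ι → PowerSeries ℝ≥0∞) : pzero F [] = 1 := rfl
@[simp] lemma pzero_cons (F : ι → PowerSeries ℝ≥0∞) (t : ι) (l : List ι) :
    pzero F (t :: l) = coeff 0 (F t) * pzero F l := by simp [pzero]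
@[simp] lemma esum_nil (F G : ι → PowerSeries ℝ≥0∞) (n : ℕ) : esum F G n [] = 0 := rfl
@[simp] lemma esum_cons (F G : ι → PowerSeries ℝ≥0∞) (n : ℕ) (t : ι) (l : List ι) :
    esum F G n (t :: l) = coeff n (G t) * pzero F l + coeff 0 (F t) * esum F G n l := rfl

lemma coeff_prodl_zero (F : ι → PowerSeries ℝ≥0∞) (l : List ι) :
    coeff 0 (prodl F l) = pzero F l := by
  induction l with
  | nil => simp
  | cons t l ih =>
    rw [prodl_cons, pzero_cons, ← ih]
    simp [coeff_zero_eq_constantCoeff, map_mul]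

lemma coeff_prodl_congr {F G : ι → PowerSeries ℝ≥0∞} {l : List ι} {n : ℕ}
    (h : ∀ t ∈ l, ∀ k < n, coeff k (F t) = coeff k (G t)) :
    ∀ k < n, coeff k (prodl F l) = coeff k (prodl G l) := by
  induction l with
  | nil => intro k hk; rfl
  | cons t l ih =>
    intro k hk
    rw [prodl_cons, prodl_cons, coeff_mul, coeff_mul]
    refine Finset.sum_congr rfl fun p hp => ?_
    rw [Finset.HasAntidiagonal.mem_antidiagonal] at hp
    have h1 : p.1 < n := lt_of_le_of_lt (hp ▸ Nat.le_add_right p.1 p.2) hk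
    have h2 : p.2 < n := lt_of_le_of_lt (hp ▸ Nat.le_add_left p.2 p.1) hk
    rw [h t (List.mem_cons_self) p.1 h1,
      ih (fun t ht k hk => h t (List.mem_cons_of_mem _ ht) k hk) p.2 h2]

lemma coeff_prodl_mono {F F' : ι → PowerSeries ℝ≥0∞} {l : List ι}
    (h : ∀ t ∈ l, ∀ k, coeff k (F t) ≤ coeff k (F' t)) :
    ∀ n, coeff n (prodl F l) ≤ coeff n (prodl F' l) := by
  induction l with
  | nil => intro n; exact le_rfl
  | cons t l ih =>
    intro n
    rw [prodl_cons, prodl_cons, coeff_mul, coeff_mul]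
    refine Finset.sum_le_sum fun p _ => ?_
    exact mul_le_mul' (h t (List.mem_cons_self) p.1)
      (ih (fun t ht k => h t (List.mem_cons_of_mem _ ht) k) p.2)

lemma coeff_mul_split {n : ℕ} (hn : 0 < n) (P Q : PowerSeries ℝ≥0∞) :
    coeff n (P * Q) = coeff 0 P * coeff n Q + coeff n P * coeff 0 Q
      + ∑ p ∈ (((Finset.HasAntidiagonal.antidiagonal n).erase (0, n)).erase (n, 0)),
          coeff p.1 P * coeff p.2 Q := by
  rw [coeff_mul]
  have h1 : ((0 : ℕ), n) ∈ Finset.HasAntidiagonal.antidiagonal n := by simp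
  have hne : ((n : ℕ), (0:ℕ)) ≠ ((0 : ℕ), n) := by
    simp only [ne_eq, Prod.mk.injEq, not_and]
    intro h; omega
  have h2 : ((n : ℕ), (0:ℕ)) ∈ (Finset.HasAntidiagonal.antidiagonal n).erase (0, n) := by
    rw [Finset.mem_erase]; exact ⟨hne, by simp⟩
  rw [← Finset.add_sum_erase _ _ h1, ← Finset.add_sum_erase _ _ h2]
  ring

lemma mid_mem_lt {n : ℕ} {p : ℕ × ℕ}
    (hp : p ∈ (((Finset.HasAntidiagonal.antidiagonal n).erase (0, n)).erase (n, 0))) :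
    p.1 < n ∧ p.2 < n := by
  rw [Finset.mem_erase, Finset.mem_erase, Finset.HasAntidiagonal.mem_antidiagonal] at hp
  obtain ⟨h1, h2, h3⟩ := hp
  constructor
  · rcases Nat.lt_or_ge p.1 n with h | h
    · exact h
    · exfalso; apply h1; have : p.1 = n := by omega
      ext <;> simp [this] <;> omega
  · rcases Nat.lt_or_ge p.2 n with h | h
    · exact h
    · exfalso; apply h2; have : p.2 = n := by omega
      ext <;> simp [this] <;> omega

/-- Key identity: top coefficient of products, when lower coefficients agree. -/
lemma pmul_eq {F G : ι → PowerSeries ℝ≥0∞} {n : ℕ} (hn : 0 < n) :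
    ∀ {l : List ι}, (∀ t ∈ l, ∀ k < n, coeff k (F t) = coeff k (G t)) →
    coeff n (prodl F l) + esum F G n l = coeff n (prodl G l) + esum F F n l := by
  intro l
  induction l with
  | nil => intro _; rfl
  | cons t l ih =>
    intro h
    have ht : ∀ k < n, coeff k (F t) = coeff k (G t) :=
      h t (List.mem_cons_self)
    have hl : ∀ t ∈ l, ∀ k < n, coeff k (F t) = coeff k (G t) :=
      fun t ht k hk => h t (List.mem_cons_of_mem _ ht) k hk
    have hA0 : coeff 0 (prodl G l) = pzero F l := by
      rw [← coeff_prodl_congr hl 0 hn, coeff_prodl_zero]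
    have ht0 : coeff 0 (G t) = coeff 0 (F t) := (ht 0 hn).symm
    have hmid : ∑ p ∈ (((Finset.HasAntidiagonal.antidiagonal n).erase (0, n)).erase (n, 0)),
          coeff p.1 (F t) * coeff p.2 (prodl F l)
        = ∑ p ∈ (((Finset.HasAntidiagonal.antidiagonal n).erase (0, n)).erase (n, 0)),
          coeff p.1 (G t) * coeff p.2 (prodl G l) := by
      refine Finset.sum_congr rfl fun p hp => ?_
      obtain ⟨hp1, hp2⟩ := mid_mem_lt hp
      rw [ht p.1 hp1, coeff_prodl_congr hl p.2 hp2]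
    rw [prodl_cons, prodl_cons, coeff_mul_split hn, coeff_mul_split hn, esum_cons, esum_cons,
      hmid, hA0, coeff_prodl_zero, ht0]
    -- now pure algebra plus IH
    have hIH := ih hl
    set a0 := coeff 0 (F t)
    set an := coeff n (F t)
    set bn := coeff n (G t)
    set M := ∑ p ∈ (((Finset.HasAntidiagonal.antidiagonal n).erase (0, n)).erase (n, 0)),
          coeff p.1 (G t) * coeff p.2 (prodl G l)
    set An := coeff n (prodl F l)
    set Bn := coeff n (prodl G l)
    set P := pzero F l
    set E1 := esum F G n l
    set E2 := esum F F n l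
    -- goal : a0 * An + an * P + M + (bn * P + a0 * E1) = a0 * Bn + bn * P + M + (an * P + a0 * E2)
    have expand : a0 * An + an * P + M + (bn * P + a0 * E1)
        = (an * P + bn * P + M) + a0 * (An + E1) := by ring
    have expand2 : a0 * Bn + bn * P + M + (an * P + a0 * E2)
        = (an * P + bn * P + M) + a0 * (Bn + E2) := by ring
    rw [expand, expand2, hIH]

lemma esum_mono {F G G' : ι → PowerSeries ℝ≥0∞} {n : ℕ} {l : List ι}
    (h : ∀ t ∈ l, coeff n (G t) ≤ coeff n (G' t)) :
    esum F G n l ≤ esum F G' n l := by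
  induction l with
  | nil => exact le_rfl
  | cons t l ih =>
    rw [esum_cons, esum_cons]
    exact add_le_add (mul_le_mul_left (h t (List.mem_cons_self)) _)
      (mul_le_mul_right (ih fun t ht => h t (List.mem_cons_of_mem _ ht)) _)

/-- Inequality version for the constant coefficient. -/
lemma pmul_le {F G : ι → PowerSeries ℝ≥0∞} :
    ∀ {l : List ι}, (∀ t ∈ l, coeff 0 (G t) ≤ coeff 0 (F t)) →
    coeff 0 (prodl F l) + esum F G 0 l ≤ coeff 0 (prodl G l) + esum F F 0 l := by
  intro l
  induction l with
  | nil => intro _; exact le_rfl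
  | cons t l ih =>
    intro h
    have ht : coeff 0 (G t) ≤ coeff 0 (F t) := h t (List.mem_cons_self)
    have hl : ∀ t ∈ l, coeff 0 (G t) ≤ coeff 0 (F t) :=
      fun t ht => h t (List.mem_cons_of_mem _ ht)
    have hIH := ih hl
    have hE : esum F G 0 l ≤ esum F F 0 l := esum_mono hl
    obtain ⟨s, hs⟩ := exists_add_of_le ht
    have hm1 : coeff 0 (F t * prodl F l) = coeff 0 (F t) * coeff 0 (prodl F l) := by
      simp [coeff_zero_eq_constantCoeff, map_mul]
    have hm2 : coeff 0 (G t * prodl G l) = coeff 0 (G t) * coeff 0 (prodl G l) := by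
      simp [coeff_zero_eq_constantCoeff, map_mul]
    rw [prodl_cons, prodl_cons, esum_cons, esum_cons, hm1, hm2]
    set a0 := coeff 0 (F t)
    set b0 := coeff 0 (G t)
    set A0 := coeff 0 (prodl F l)
    set B0 := coeff 0 (prodl G l)
    set P := pzero F l
    set E1 := esum F G 0 l
    set E2 := esum F F 0 l
    have hPA : A0 = P := coeff_prodl_zero F l
    -- goal : a0 * A0 + (b0 * P + a0 * E1) ≤ b0 * B0 + (a0 * P + a0 * E2)
    calc a0 * A0 + (b0 * P + a0 * E1) = a0 * P + (b0 * (A0 + E1) + s * E1) := by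
          rw [hPA, hs]; ring
      _ ≤ a0 * P + (b0 * (B0 + E2) + s * E2) :=
          add_le_add_right (add_le_add (mul_le_mul_right hIH b0) (mul_le_mul_right hE s)) _
      _ = b0 * B0 + (a0 * P + a0 * E2) := by rw [hs]; ring

/-- Cauchy product for `ℝ≥0∞` power series evaluation. -/
lemma evv_coeff_mul (P Q : PowerSeries ℝ≥0∞) (x : ℝ≥0∞) :
    evv (fun n => coeff n (P * Q)) x
      = evv (fun n => coeff n P) x * evv (fun n => coeff n Q) x := by
  unfold evv
  have h1 : ∀ n : ℕ, coeff n (P * Q) * x ^ n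
      = ∑ p ∈ Finset.HasAntidiagonal.antidiagonal n, (coeff p.1 P * x ^ p.1) * (coeff p.2 Q * x ^ p.2) := by
    intro n
    rw [coeff_mul, Finset.sum_mul]
    refine Finset.sum_congr rfl fun p hp => ?_
    rw [Finset.HasAntidiagonal.mem_antidiagonal] at hp
    rw [← hp, pow_add]; ring
  calc (∑' n, coeff n (P * Q) * x ^ n)
      = ∑' (n : ℕ), ∑ p ∈ Finset.HasAntidiagonal.antidiagonal n,
          (coeff p.1 P * x ^ p.1) * (coeff p.2 Q * x ^ p.2) := by
        exact tsum_congr h1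
    _ = ∑' (n : ℕ) (p : (Finset.HasAntidiagonal.antidiagonal n : Finset (ℕ × ℕ))),
          (coeff (p : ℕ × ℕ).1 P * x ^ (p : ℕ × ℕ).1) *
          (coeff (p : ℕ × ℕ).2 Q * x ^ (p : ℕ × ℕ).2) := by
        refine tsum_congr fun n => ?_
        exact (Finset.tsum_subtype (Finset.HasAntidiagonal.antidiagonal n)
          (fun p : ℕ × ℕ => (coeff p.1 P * x ^ p.1) * (coeff p.2 Q * x ^ p.2))).symm
    _ = ∑' (σ : Σ n : ℕ, (Finset.HasAntidiagonal.antidiagonal n : Finset (ℕ × ℕ))),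
          (coeff (σ.2 : ℕ × ℕ).1 P * x ^ (σ.2 : ℕ × ℕ).1) *
          (coeff (σ.2 : ℕ × ℕ).2 Q * x ^ (σ.2 : ℕ × ℕ).2) := by
        exact (ENNReal.tsum_sigma' (fun σ : Σ n : ℕ, (Finset.HasAntidiagonal.antidiagonal n : Finset (ℕ × ℕ)) =>
          (coeff (σ.2 : ℕ × ℕ).1 P * x ^ (σ.2 : ℕ × ℕ).1) *
          (coeff (σ.2 : ℕ × ℕ).2 Q * x ^ (σ.2 : ℕ × ℕ).2))).symm
    _ = ∑' (p : ℕ × ℕ), (coeff p.1 P * x ^ p.1) * (coeff p.2 Q * x ^ p.2) := by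
        exact Finset.HasAntidiagonal.sigmaAntidiagonalEquivProd.tsum_eq
          (fun p : ℕ × ℕ => (coeff p.1 P * x ^ p.1) * (coeff p.2 Q * x ^ p.2))
    _ = (∑' n, coeff n P * x ^ n) * ∑' n, coeff n Q * x ^ n := by
        rw [ENNReal.tsum_prod']
        simp_rw [ENNReal.tsum_mul_left, ENNReal.tsum_mul_right]

@[simp] lemma evv_coeff_one (x : ℝ≥0∞) : evv (fun n => coeff n (1 : PowerSeries ℝ≥0∞)) x = 1 := by
  unfold evv
  rw [tsum_eq_single 0]
  · simp
  · intro n hn; simp [coeff_one, hn]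

lemma evv_coeff_prodl (F : ι → PowerSeries ℝ≥0∞) (l : List ι) (x : ℝ≥0∞) :
    evv (fun n => coeff n (prodl F l)) x
      = (l.map (fun t => evv (fun n => coeff n (F t)) x)).prod := by
  induction l with
  | nil =>
    rw [prodl_nil, List.map_nil, List.prod_nil]
    exact evv_coeff_one x
  | cons t l ih => rw [prodl_cons, evv_coeff_mul, List.map_cons, List.prod_cons, ih]

lemma evv_coeff_X_mul (P : PowerSeries ℝ≥0∞) (x : ℝ≥0∞) :
    evv (fun n => coeff n (X * P)) x = x * evv (fun n => coeff n P) x := by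
  unfold evv
  rw [tsum_eq_zero_add' ENNReal.summable]
  have h0 : coeff 0 (X * P) = 0 := by
    simp [coeff_zero_eq_constantCoeff, map_mul]
  simp only [h0, coeff_succ_X_mul, zero_mul, zero_add, pow_succ]
  rw [← ENNReal.tsum_mul_left]
  congr 1; funext n; ring

lemma evv_coeff_X_pow_mul (P : PowerSeries ℝ≥0∞) (k : ℕ) (x : ℝ≥0∞) :
    evv (fun n => coeff n (X ^ k * P)) x = x ^ k * evv (fun n => coeff n P) x := by
  induction k with
  | zero => simp
  | succ k ih =>
    have : (X : PowerSeries ℝ≥0∞) ^ (k + 1) * P = X * (X ^ k * P) := by ring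
    rw [this, evv_coeff_X_mul, ih, pow_succ]; ring

lemma prodl_append (F : ι → PowerSeries ℝ≥0∞) (l₁ l₂ : List ι) :
    prodl F (l₁ ++ l₂) = prodl F l₁ * prodl F l₂ := by
  simp [prodl, List.prod_append]

lemma pzero_append (F : ι → PowerSeries ℝ≥0∞) (l₁ l₂ : List ι) :
    pzero F (l₁ ++ l₂) = pzero F l₁ * pzero F l₂ := by
  simp [pzero, List.prod_append]

lemma esum_append (F G : ι → PowerSeries ℝ≥0∞) (n : ℕ) (l₁ l₂ : List ι) :
    esum F G n (l₁ ++ l₂) = esum F G n l₁ * pzero F l₂ + pzero F l₁ * esum F G n l₂ := by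
  induction l₁ with
  | nil => simp
  | cons t l ih =>
    rw [List.cons_append, esum_cons, ih, esum_cons, pzero_cons, pzero_append]
    ring

lemma prodl_replicate (F : ι → PowerSeries ℝ≥0∞) (k : ℕ) (j : ι) :
    prodl F (List.replicate k j) = F j ^ k := by
  simp [prodl, List.map_replicate, List.prod_replicate]

lemma pzero_replicate (F : ι → PowerSeries ℝ≥0∞) (k : ℕ) (j : ι) :
    pzero F (List.replicate k j) = coeff 0 (F j) ^ k := by
  simp [pzero, List.map_replicate, List.prod_replicate]

lemma esum_replicate (F G : ι → PowerSeries ℝ≥0∞) (n : ℕ) (k : ℕ) (j : ι) :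
    esum F G n (List.replicate k j)
      = (k : ℝ≥0∞) * coeff n (G j) * coeff 0 (F j) ^ (k - 1) := by
  induction k with
  | zero => simp
  | succ k ih =>
    rw [List.replicate_succ, esum_cons, ih, pzero_replicate]
    rcases Nat.eq_zero_or_pos k with hk | hk
    · subst hk; simp
    · have h1 : k - 1 + 1 = k := Nat.succ_pred_eq_of_pos hk
      have h2 : (k + 1 : ℕ) - 1 = k := by omega
      have h3 : coeff 0 (F j) ^ k = coeff 0 (F j) ^ (k - 1) * coeff 0 (F j) := by
        rw [← pow_succ, h1]
      rw [h2, h3]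
      push_cast
      ring

lemma pzero_flatMap (F : ι' → PowerSeries ℝ≥0∞) (f : ι → List ι') (l : List ι) :
    pzero F (l.flatMap f) = (l.map (fun j => pzero F (f j))).prod := by
  induction l with
  | nil => simp
  | cons t l ih => rw [List.flatMap_cons, pzero_append, ih, List.map_cons, List.prod_cons]


variable {ι' : Type} [DecidableEq ι]
lemma esum_flatMap (F G : ι' → PowerSeries ℝ≥0∞) (n : ℕ) (f : ι → List ι') :
    ∀ l : List ι, l.Nodup →
    esum F G n (l.flatMap f) =
      (l.map (fun j => esum F G n (f j) *
        ((l.filter (fun x => x ≠ j)).map (fun j' => pzero F (f j'))).prod)).sum := by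
  intro l
  induction l with
  | nil => intro _; simp
  | cons a tl ih =>
    intro hnd
    rw [List.nodup_cons] at hnd
    obtain ⟨ha, hnd⟩ := hnd
    rw [List.flatMap_cons, esum_append, ih hnd, List.map_cons, List.sum_cons]
    -- the `a`-term
    have hfa : (a :: tl).filter (fun x => x ≠ a) = tl := by
      rw [List.filter_cons]
      rw [if_neg (by simp : ¬ (decide ¬ a = a) = true)]
      rw [List.filter_eq_self]
      intro b hb
      simp only [decide_not, Bool.not_eq_true', decide_eq_false_iff_not]
      intro hba; exact ha (hba ▸ hb)
    have hterm1 : esum F G n (f a) * pzero F (tl.flatMap f)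
        = esum F G n (f a) *
          (((a :: tl).filter (fun x => x ≠ a)).map (fun j' => pzero F (f j'))).prod := by
      rw [hfa, pzero_flatMap]
    -- the remaining terms
    have hterm2 : (tl.map (fun j => esum F G n (f j) *
          ((tl.filter (fun x => x ≠ j)).map (fun j' => pzero F (f j'))).prod)).sum * pzero F (f a)
        = (tl.map (fun j => esum F G n (f j) *
          (((a :: tl).filter (fun x => x ≠ j)).map (fun j' => pzero F (f j'))).prod)).sum := by
      rw [← List.sum_map_mul_right]
      refine congrArg List.sum (List.map_congr_left fun j hj => ?_)
      have haj : a ≠ j := fun h => ha (h ▸ hj)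
      rw [List.filter_cons, if_pos (by simpa using haj : (decide ¬ a = j) = true), List.map_cons,
        List.prod_cons]
      ring
    rw [pzero_flatMap] at hterm1 ⊢
    rw [← hterm2]
    rw [hterm1]
    ring
variable {m : ℕ}

/-- The list with `d (j+1)` copies of each `j : Fin m`. -/
def dlist (d : Fin (m + 1) → ℕ) : List (Fin m) :=
  (List.finRange m).flatMap (fun j => List.replicate (d j.succ) j)

/-- The weight `∏_l (F_l(0))^{d_{l} - [l = j]}`. -/
noncomputable def wgt (Y0 : Fin m → ℝ≥0∞) (d : Fin (m + 1) → ℕ) (j : Fin m) : ℝ≥0∞ :=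
  ∏ l : Fin m, Y0 l ^ (if l = j then d l.succ - 1 else d l.succ)

lemma prodl_dlist (F : Fin m → PowerSeries ℝ≥0∞) (d : Fin (m + 1) → ℕ) :
    prodl F (dlist d) = ∏ j : Fin m, F j ^ (d j.succ) := by
  rw [Fin.prod_univ_def, dlist]
  generalize List.finRange m = l
  induction l with
  | nil => simp [prodl_nil]
  | cons a tl ih =>
    rw [List.flatMap_cons, prodl_append, ih, List.map_cons, List.prod_cons, prodl_replicate]

lemma pzero_dlist (F : Fin m → PowerSeries ℝ≥0∞) (d : Fin (m + 1) → ℕ) :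
    pzero F (dlist d) = ∏ j : Fin m, coeff 0 (F j) ^ (d j.succ) := by
  rw [Fin.prod_univ_def, dlist, pzero_flatMap]
  congr 1
  refine List.map_congr_left fun j _ => pzero_replicate F _ j

/-- list-filter product vs `Finset.erase` product -/
lemma filter_prod_eq_erase (h : Fin m → ℝ≥0∞) (j : Fin m) :
    (((List.finRange m).filter (fun x => x ≠ j)).map h).prod
      = ∏ l ∈ Finset.univ.erase j, h l := by
  rw [← Finset.filter_ne' Finset.univ j, Finset.prod_filter, Fin.prod_univ_def]
  generalize List.finRange m = l
  induction l with
  | nil => simp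
  | cons a tl ih =>
    rw [List.filter_cons]
    by_cases haj : a ≠ j
    · rw [if_pos (by simpa using haj), List.map_cons, List.prod_cons, List.map_cons,
        List.prod_cons, ih, if_pos haj]
    · push_neg at haj
      rw [if_neg (by simpa using haj), List.map_cons, List.prod_cons, ih, if_neg (by simpa using haj)]
      simp

lemma esum_dlist (F G : Fin m → PowerSeries ℝ≥0∞) (n : ℕ) (d : Fin (m + 1) → ℕ) :
    esum F G n (dlist d)
      = ∑ j : Fin m, (d j.succ : ℝ≥0∞) * coeff n (G j)
          * wgt (fun l => coeff 0 (F l)) d j := by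
  rw [dlist, esum_flatMap F G n _ _ (List.nodup_finRange m), Fin.sum_univ_def]
  congr 1
  refine List.map_congr_left fun j _ => ?_
  rw [esum_replicate]
  have hw : ((List.filter (fun x => x ≠ j) (List.finRange m)).map
        (fun j' => pzero F (List.replicate (d j'.succ) j'))).prod
      = ∏ l ∈ Finset.univ.erase j, coeff 0 (F l) ^ (d l.succ) := by
    rw [← filter_prod_eq_erase (fun l => coeff 0 (F l) ^ (d l.succ)) j]
    congr 1
    refine List.map_congr_left fun j' _ => pzero_replicate F _ j'
  rw [hw, wgt]
  rw [← Finset.mul_prod_erase Finset.univ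
    (fun l => coeff 0 (F l) ^ (if l = j then d l.succ - 1 else d l.succ))
    (Finset.mem_univ j)]
  rw [if_pos rfl]
  have : ∏ l ∈ Finset.univ.erase j,
      coeff 0 (F l) ^ (if l = j then d l.succ - 1 else d l.succ)
      = ∏ l ∈ Finset.univ.erase j, coeff 0 (F l) ^ (d l.succ) := by
    refine Finset.prod_congr rfl fun l hl => ?_
    rw [if_neg (Finset.mem_erase.mp hl).1]
  rw [this]
  ring
/-- generic product over `dlist`. -/
lemma dlist_map_prod {M : Type*} [CommMonoid M] (h : Fin m → M) (d : Fin (m + 1) → ℕ) :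
    ((dlist d).map h).prod = ∏ j : Fin m, h j ^ (d j.succ) := by
  rw [Fin.prod_univ_def, dlist]
  generalize List.finRange m = l
  induction l with
  | nil => simp
  | cons a tl ih =>
    rw [List.flatMap_cons, List.map_append, List.prod_append, ih, List.map_cons,
      List.prod_cons, List.map_replicate, List.prod_replicate]

/-- The monomial `X^{d_0} ∏_j Y_j^{d_j}`. -/
noncomputable def monE (d : Fin (m + 1) → ℕ) (F : Fin m → PowerSeries ℝ≥0∞) :
    PowerSeries ℝ≥0∞ :=
  X ^ (d 0) * prodl F (dlist d)

/-- `H` as a formal operation on power series families, `ℝ≥0∞`-valued coefficients. -/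
noncomputable def HfP (S : PosSystem m) (F : Fin m → PowerSeries ℝ≥0∞) (i : Fin m) (n : ℕ) :
    ℝ≥0∞ :=
  ∑' d : Fin (m + 1) → ℕ, ENNReal.ofReal (S.c i d) * coeff n (monE d F)

/-- The `ℝ≥0∞` Jacobian entries at `(0, Y0)`. -/
noncomputable def JEnn (S : PosSystem m) (Y0 : Fin m → ℝ≥0∞) (i j : Fin m) : ℝ≥0∞ :=
  ∑' d : Fin (m + 1) → ℕ, ENNReal.ofReal (S.c i d) * (d j.succ : ℝ≥0∞)
    * ((0 : ℝ≥0∞) ^ (d 0) * wgt Y0 d j)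

lemma mon_key {F G : Fin m → PowerSeries ℝ≥0∞} {n : ℕ} (hn : 0 < n)
    (hlow : ∀ j, ∀ k < n, coeff k (F j) = coeff k (G j)) (d : Fin (m + 1) → ℕ) :
    coeff n (monE d F)
      + ∑ j : Fin m, (d j.succ : ℝ≥0∞) * coeff n (G j)
          * ((0 : ℝ≥0∞) ^ (d 0) * wgt (fun l => coeff 0 (F l)) d j)
    = coeff n (monE d G)
      + ∑ j : Fin m, (d j.succ : ℝ≥0∞) * coeff n (F j)
          * ((0 : ℝ≥0∞) ^ (d 0) * wgt (fun l => coeff 0 (F l)) d j) := by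
  rcases Nat.eq_zero_or_pos (d 0) with h0 | h0
  · -- no X factor
    have hmon : ∀ H : Fin m → PowerSeries ℝ≥0∞, monE d H = prodl H (dlist d) := by
      intro H; rw [monE, h0, pow_zero, one_mul]
    simp only [hmon, h0, pow_zero, one_mul]
    have := pmul_eq hn (F := F) (G := G) (l := dlist d) (fun t _ k hk => hlow t k hk)
    rw [esum_dlist, esum_dlist] at this
    exact this
  · -- with X factor : both coefficients agree and weights vanish
    have hz : (0 : ℝ≥0∞) ^ (d 0) = 0 := zero_pow (by omega)
    have hsum : ∀ H : Fin m → PowerSeries ℝ≥0∞,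
        ∑ j : Fin m, (d j.succ : ℝ≥0∞) * coeff n (H j)
          * ((0 : ℝ≥0∞) ^ (d 0) * wgt (fun l => coeff 0 (F l)) d j) = 0 := by
      intro H
      refine Finset.sum_eq_zero fun j _ => ?_
      rw [hz, zero_mul, mul_zero]
    rw [hsum F, hsum G, add_zero, add_zero]
    rw [monE, monE, coeff_X_pow_mul', coeff_X_pow_mul']
    by_cases hdn : d 0 ≤ n
    · rw [if_pos hdn, if_pos hdn]
      exact coeff_prodl_congr (fun t _ k hk => hlow t k hk) (n - d 0) (by omega)
    · rw [if_neg hdn, if_neg hdn]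

lemma mon_key0 {F G : Fin m → PowerSeries ℝ≥0∞}
    (hle : ∀ j, coeff 0 (G j) ≤ coeff 0 (F j)) (d : Fin (m + 1) → ℕ) :
    coeff 0 (monE d F)
      + ∑ j : Fin m, (d j.succ : ℝ≥0∞) * coeff 0 (G j)
          * ((0 : ℝ≥0∞) ^ (d 0) * wgt (fun l => coeff 0 (F l)) d j)
    ≤ coeff 0 (monE d G)
      + ∑ j : Fin m, (d j.succ : ℝ≥0∞) * coeff 0 (F j)
          * ((0 : ℝ≥0∞) ^ (d 0) * wgt (fun l => coeff 0 (F l)) d j) := by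
  rcases Nat.eq_zero_or_pos (d 0) with h0 | h0
  · have hmon : ∀ H : Fin m → PowerSeries ℝ≥0∞, monE d H = prodl H (dlist d) := by
      intro H; rw [monE, h0, pow_zero, one_mul]
    simp only [hmon, h0, pow_zero, one_mul]
    have := pmul_le (F := F) (G := G) (l := dlist d) (fun t _ => hle t)
    rw [esum_dlist, esum_dlist] at this
    exact this
  · have hz : (0 : ℝ≥0∞) ^ (d 0) = 0 := zero_pow (by omega)
    have hsum : ∀ H : Fin m → PowerSeries ℝ≥0∞,
        ∑ j : Fin m, (d j.succ : ℝ≥0∞) * coeff 0 (H j)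
          * ((0 : ℝ≥0∞) ^ (d 0) * wgt (fun l => coeff 0 (F l)) d j) = 0 := by
      intro H
      refine Finset.sum_eq_zero fun j _ => ?_
      rw [hz, zero_mul, mul_zero]
    rw [hsum F, hsum G, add_zero, add_zero]
    rw [monE, monE, coeff_X_pow_mul', coeff_X_pow_mul', if_neg (by omega), if_neg (by omega)]

lemma HfP_key (S : PosSystem m) {F G : Fin m → PowerSeries ℝ≥0∞} {n : ℕ} (hn : 0 < n)
    (hlow : ∀ j, ∀ k < n, coeff k (F j) = coeff k (G j)) (i : Fin m) :
    HfP S F i n + ∑ j : Fin m, JEnn S (fun l => coeff 0 (F l)) i j * coeff n (G j)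
    = HfP S G i n + ∑ j : Fin m, JEnn S (fun l => coeff 0 (F l)) i j * coeff n (F j) := by
  have key : ∀ A B : Fin m → PowerSeries ℝ≥0∞,
      HfP S A i n + ∑ j : Fin m, JEnn S (fun l => coeff 0 (F l)) i j * coeff n (B j)
      = ∑' d : Fin (m + 1) → ℕ, ENNReal.ofReal (S.c i d) *
          (coeff n (monE d A)
            + ∑ j : Fin m, (d j.succ : ℝ≥0∞) * coeff n (B j)
              * ((0 : ℝ≥0∞) ^ (d 0) * wgt (fun l => coeff 0 (F l)) d j)) := by
    intro A B
    rw [HfP]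
    have h1 : ∑ j : Fin m, JEnn S (fun l => coeff 0 (F l)) i j * coeff n (B j)
        = ∑' d : Fin (m + 1) → ℕ, ∑ j : Fin m, ENNReal.ofReal (S.c i d) *
            ((d j.succ : ℝ≥0∞) * coeff n (B j)
              * ((0 : ℝ≥0∞) ^ (d 0) * wgt (fun l => coeff 0 (F l)) d j)) := by
      calc ∑ j : Fin m, JEnn S (fun l => coeff 0 (F l)) i j * coeff n (B j)
          = ∑ j : Fin m, ∑' d : Fin (m + 1) → ℕ, ENNReal.ofReal (S.c i d) *
              ((d j.succ : ℝ≥0∞) * coeff n (B j)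
                * ((0 : ℝ≥0∞) ^ (d 0) * wgt (fun l => coeff 0 (F l)) d j)) := by
            refine Finset.sum_congr rfl fun j _ => ?_
            rw [JEnn, ← ENNReal.tsum_mul_right]
            exact tsum_congr fun d => by ring
        _ = _ := (Summable.tsum_finsetSum (fun j _ => ENNReal.summable)).symm
    rw [h1, ← ENNReal.tsum_add]
    refine tsum_congr fun d => ?_
    rw [mul_add, Finset.mul_sum]
  rw [key F G, key G F]
  refine tsum_congr fun d => ?_
  rw [mon_key hn hlow d]

lemma HfP_key0 (S : PosSystem m) {F G : Fin m → PowerSeries ℝ≥0∞}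
    (hle : ∀ j, coeff 0 (G j) ≤ coeff 0 (F j)) (i : Fin m) :
    HfP S F i 0 + ∑ j : Fin m, JEnn S (fun l => coeff 0 (F l)) i j * coeff 0 (G j)
    ≤ HfP S G i 0 + ∑ j : Fin m, JEnn S (fun l => coeff 0 (F l)) i j * coeff 0 (F j) := by
  have key : ∀ A B : Fin m → PowerSeries ℝ≥0∞,
      HfP S A i 0 + ∑ j : Fin m, JEnn S (fun l => coeff 0 (F l)) i j * coeff 0 (B j)
      = ∑' d : Fin (m + 1) → ℕ, ENNReal.ofReal (S.c i d) *
          (coeff 0 (monE d A)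
            + ∑ j : Fin m, (d j.succ : ℝ≥0∞) * coeff 0 (B j)
              * ((0 : ℝ≥0∞) ^ (d 0) * wgt (fun l => coeff 0 (F l)) d j)) := by
    intro A B
    rw [HfP]
    have h1 : ∑ j : Fin m, JEnn S (fun l => coeff 0 (F l)) i j * coeff 0 (B j)
        = ∑' d : Fin (m + 1) → ℕ, ∑ j : Fin m, ENNReal.ofReal (S.c i d) *
            ((d j.succ : ℝ≥0∞) * coeff 0 (B j)
              * ((0 : ℝ≥0∞) ^ (d 0) * wgt (fun l => coeff 0 (F l)) d j)) := by
      calc ∑ j : Fin m, JEnn S (fun l => coeff 0 (F l)) i j * coeff 0 (B j)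
          = ∑ j : Fin m, ∑' d : Fin (m + 1) → ℕ, ENNReal.ofReal (S.c i d) *
              ((d j.succ : ℝ≥0∞) * coeff 0 (B j)
                * ((0 : ℝ≥0∞) ^ (d 0) * wgt (fun l => coeff 0 (F l)) d j)) := by
            refine Finset.sum_congr rfl fun j _ => ?_
            rw [JEnn, ← ENNReal.tsum_mul_right]
            exact tsum_congr fun d => by ring
        _ = _ := (Summable.tsum_finsetSum (fun j _ => ENNReal.summable)).symm
    rw [h1, ← ENNReal.tsum_add]
    refine tsum_congr fun d => ?_
    rw [mul_add, Finset.mul_sum]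
  rw [key F G, key G F]
  exact Summable.tsum_le_tsum (fun d => mul_le_mul_right (mon_key0 hle d) _)
    ENNReal.summable ENNReal.summable

/-- Evaluation of `HfP`. -/
lemma evv_HfP (S : PosSystem m) (F : Fin m → PowerSeries ℝ≥0∞) (i : Fin m) (x : ℝ≥0∞) :
    evv (HfP S F i) x
      = ∑' d : Fin (m + 1) → ℕ, ENNReal.ofReal (S.c i d)
          * (x ^ (d 0) * ∏ j : Fin m, (evv (fun n => coeff n (F j)) x) ^ (d j.succ)) := by
  rw [evv]
  have h1 : ∀ n : ℕ, HfP S F i n * x ^ n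
      = ∑' d : Fin (m + 1) → ℕ, ENNReal.ofReal (S.c i d) * coeff n (monE d F) * x ^ n := by
    intro n; rw [HfP, ← ENNReal.tsum_mul_right]
  calc (∑' n, HfP S F i n * x ^ n)
      = ∑' (n : ℕ) (d : Fin (m + 1) → ℕ),
          ENNReal.ofReal (S.c i d) * coeff n (monE d F) * x ^ n := tsum_congr h1
    _ = ∑' (d : Fin (m + 1) → ℕ) (n : ℕ),
          ENNReal.ofReal (S.c i d) * coeff n (monE d F) * x ^ n := ENNReal.tsum_comm
    _ = ∑' d : Fin (m + 1) → ℕ, ENNReal.ofReal (S.c i d)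
          * (x ^ (d 0) * ∏ j : Fin m, (evv (fun n => coeff n (F j)) x) ^ (d j.succ)) := by
        refine tsum_congr fun d => ?_
        have h2 : (∑' n : ℕ, ENNReal.ofReal (S.c i d) * coeff n (monE d F) * x ^ n)
            = ENNReal.ofReal (S.c i d) * evv (fun n => coeff n (monE d F)) x := by
          rw [evv, ← ENNReal.tsum_mul_left]
          exact tsum_congr fun n => by ring
        rw [h2]
        congr 1
        rw [monE, evv_coeff_X_pow_mul, evv_coeff_prodl]
        congr 1
        exact dlist_map_prod (fun t => evv (fun n => coeff n (F t)) x) d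



lemma summable_scaled {h : ℕ → ℝ} (h0 : ∀ n, 0 ≤ h n) {x₀ : ℝ}
    (hs : Summable fun n => h n * x₀ ^ n) {x : ℝ} (hx : 0 ≤ x) (hxx : x ≤ x₀) :
    Summable fun n => h n * x ^ n := by
  refine Summable.of_nonneg_of_le (fun n => mul_nonneg (h0 n) (pow_nonneg hx n))
    (fun n => ?_) hs
  exact mul_le_mul_of_nonneg_left (pow_le_pow_left₀ hx hxx n) (h0 n)

lemma summable_shift {h : ℕ → ℝ} {x : ℝ} (hx : 0 < x)
    (hs : Summable fun n => h n * x ^ n) (n : ℕ) :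
    Summable fun k => h (k + n) * x ^ k := by
  have h1 : Summable fun k => h (k + n) * x ^ (k + n) := (summable_nat_add_iff n).2 hs
  have h2 := h1.mul_left ((x ^ n)⁻¹)
  refine h2.congr fun k => ?_
  rw [pow_add]
  field_simp

/-- Uniqueness of nonnegative power series coefficients from equality of sums on `(0, x₀]`. -/
lemma unique_coeffs {f g : ℕ → ℝ} (hf : ∀ n, 0 ≤ f n) (hg : ∀ n, 0 ≤ g n) {x₀ : ℝ}
    (hx₀ : 0 < x₀) (hfs : Summable fun n => f n * x₀ ^ n)
    (hgs : Summable fun n => g n * x₀ ^ n)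
    (heq : ∀ x : ℝ, 0 < x → x ≤ x₀ → ∑' n, f n * x ^ n = ∑' n, g n * x ^ n) :
    ∀ n, f n = g n := by
  intro n
  induction n using Nat.strong_induction_on with
  | _ n ih =>
  -- tail equality at each x
  have tail_eq : ∀ x : ℝ, 0 < x → x ≤ x₀ →
      ∑' k, f (k + n) * x ^ k = ∑' k, g (k + n) * x ^ k := by
    intro x hx hxx
    have hfx := summable_scaled hf hfs hx.le hxx
    have hgx := summable_scaled hg hgs hx.le hxx
    have h1 := Summable.sum_add_tsum_nat_add n hfx
    have h2 := Summable.sum_add_tsum_nat_add n hgx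
    have hheads : ∑ i ∈ Finset.range n, f i * x ^ i = ∑ i ∈ Finset.range n, g i * x ^ i :=
      Finset.sum_congr rfl fun i hi => by rw [ih i (Finset.mem_range.mp hi)]
    have htails : ∑' k, f (k + n) * x ^ (k + n) = ∑' k, g (k + n) * x ^ (k + n) := by
      have h3 := heq x hx hxx
      rw [← h1, ← h2, hheads] at h3
      linarith
    have hfact : ∀ h : ℕ → ℝ, (∑' k, h (k + n) * x ^ (k + n)) = x ^ n * ∑' k, h (k + n) * x ^ k := by
      intro h
      rw [← tsum_mul_left]
      exact tsum_congr fun k => by rw [pow_add]; ring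
    rw [hfact f, hfact g] at htails
    exact mul_left_cancel₀ (pow_ne_zero n hx.ne') htails
  have hCf0 : (0:ℝ) ≤ ∑' k, f (k + (n+1)) * x₀ ^ k :=
    tsum_nonneg fun k => mul_nonneg (hf _) (pow_nonneg hx₀.le _)
  have hCg0 : (0:ℝ) ≤ ∑' k, g (k + (n+1)) * x₀ ^ k :=
    tsum_nonneg fun k => mul_nonneg (hg _) (pow_nonneg hx₀.le _)
  set Cf := ∑' k, f (k + (n+1)) * x₀ ^ k with hCf
  set Cg := ∑' k, g (k + (n+1)) * x₀ ^ k with hCg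
  -- two-sided bounds at each x
  have bound : ∀ (h : ℕ → ℝ), (∀ j, 0 ≤ h j) → (Summable fun j => h j * x₀ ^ j) →
      ∀ x : ℝ, 0 < x → x ≤ x₀ →
      h n ≤ (∑' k, h (k + n) * x ^ k) ∧
      (∑' k, h (k + n) * x ^ k) ≤ h n + x * ∑' k, h (k + (n+1)) * x₀ ^ k := by
    intro h h0 hs x hx hxx
    have hsx := summable_scaled h0 hs hx.le hxx
    have hsh := summable_shift hx hsx n
    have hsh1 := summable_shift hx hsx (n+1)
    have hsh1' := summable_shift hx₀ hs (n+1)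
    constructor
    · have := Summable.le_tsum hsh 0 (fun k _ => mul_nonneg (h0 _) (pow_nonneg hx.le _))
      simpa using this
    · have hsplit := Summable.tsum_eq_zero_add hsh
      have hshift2 : (∑' k, h ((k+1) + n) * x ^ (k+1)) = x * ∑' k, h (k + (n+1)) * x ^ k := by
        rw [← tsum_mul_left]
        refine tsum_congr fun k => ?_
        have e1 : (k+1) + n = k + (n+1) := by omega
        rw [e1, pow_succ]
        ring
      have htail_le : (∑' k, h (k + (n+1)) * x ^ k) ≤ ∑' k, h (k + (n+1)) * x₀ ^ k := by
        refine Summable.tsum_le_tsum (fun k => ?_) hsh1 hsh1'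
        exact mul_le_mul_of_nonneg_left (pow_le_pow_left₀ hx.le hxx k) (h0 _)
      rw [hsplit, hshift2]
      simp only [zero_add, pow_zero, mul_one]
      have := mul_le_mul_of_nonneg_left htail_le hx.le
      linarith
  -- conclude
  have hmain : ∀ x : ℝ, 0 < x → x ≤ x₀ → f n ≤ g n + x * Cg ∧ g n ≤ f n + x * Cf := by
    intro x hx hxx
    obtain ⟨hfl, hfu⟩ := bound f hf hfs x hx hxx
    obtain ⟨hgl, hgu⟩ := bound g hg hgs x hx hxx
    rw [tail_eq x hx hxx] at hfl
    rw [← tail_eq x hx hxx] at hgl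
    exact ⟨le_trans hfl hgu, le_trans hgl hfu⟩
  have h1 : f n ≤ g n := by
    refine le_of_forall_pos_le_add fun ε hε => ?_
    set x := min x₀ (ε / (Cg + 1)) with hxdef
    have hx : 0 < x := lt_min hx₀ (div_pos hε (by linarith))
    have hxx : x ≤ x₀ := min_le_left _ _
    have := (hmain x hx hxx).1
    have hxc : x * Cg ≤ ε := by
      have hx2 : x ≤ ε / (Cg + 1) := min_le_right _ _
      have : x * Cg ≤ (ε / (Cg + 1)) * Cg :=
        mul_le_mul_of_nonneg_right hx2 hCg0
      have h3 : (ε / (Cg + 1)) * Cg ≤ ε := by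
        rw [div_mul_eq_mul_div, div_le_iff₀ (by linarith : (0:ℝ) < Cg + 1)]
        nlinarith
      linarith
    linarith
  have h2 : g n ≤ f n := by
    refine le_of_forall_pos_le_add fun ε hε => ?_
    set x := min x₀ (ε / (Cf + 1)) with hxdef
    have hx : 0 < x := lt_min hx₀ (div_pos hε (by linarith))
    have hxx : x ≤ x₀ := min_le_left _ _
    have := (hmain x hx hxx).2
    have hxc : x * Cf ≤ ε := by
      have hx2 : x ≤ ε / (Cf + 1) := min_le_right _ _
      have : x * Cf ≤ (ε / (Cf + 1)) * Cf :=
        mul_le_mul_of_nonneg_right hx2 hCf0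
      have h3 : (ε / (Cf + 1)) * Cf ≤ ε := by
        rw [div_mul_eq_mul_div, div_le_iff₀ (by linarith : (0:ℝ) < Cf + 1)]
        nlinarith
      linarith
    linarith
  exact le_antisymm h1 h2

section Bridge
variable {m : ℕ}

lemma vec_nonneg {a : ℝ} {B : Fin m → ℝ} (ha : 0 ≤ a) (hB : ∀ j, 0 ≤ B j) :
    ∀ k, 0 ≤ vec a B k := by
  intro k
  refine Fin.cases ?_ ?_ k
  · rw [vec, Fin.cons_zero]; exact ha
  · intro l; rw [vec, Fin.cons_succ]; exact hB l

lemma prod_vec (a : ℝ) (B : Fin m → ℝ) (d : Fin (m + 1) → ℕ) :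
    ∏ k : Fin (m + 1), (vec a B) k ^ d k = a ^ (d 0) * ∏ j : Fin m, (B j) ^ (d j.succ) := by
  rw [Fin.prod_univ_succ]
  simp only [vec, Fin.cons_zero, Fin.cons_succ]

lemma term_nonneg (S : PosSystem m) (i : Fin m) {x : Fin (m + 1) → ℝ}
    (hx : ∀ k, 0 ≤ x k) (d : Fin (m + 1) → ℕ) : 0 ≤ term S i x d :=
  mul_nonneg (S.nonneg i d) (Finset.prod_nonneg fun k _ => pow_nonneg (hx k) _)

lemma ofReal_term (S : PosSystem m) (i : Fin m) {a : ℝ} {B : Fin m → ℝ}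
    (ha : 0 ≤ a) (hB : ∀ j, 0 ≤ B j) (d : Fin (m + 1) → ℕ) :
    ENNReal.ofReal (term S i (vec a B) d)
      = ENNReal.ofReal (S.c i d) *
        (ENNReal.ofReal a ^ (d 0) * ∏ j : Fin m, ENNReal.ofReal (B j) ^ (d j.succ)) := by
  rw [term, prod_vec, ENNReal.ofReal_mul (S.nonneg i d),
    ENNReal.ofReal_mul (pow_nonneg ha _), ENNReal.ofReal_pow ha,
    ENNReal.ofReal_prod_of_nonneg (fun j _ => pow_nonneg (hB j) _)]
  congr 1
  congr 1
  exact Finset.prod_congr rfl fun j _ => ENNReal.ofReal_pow (hB j) _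

lemma ofReal_Hval (S : PosSystem m) (i : Fin m) {a : ℝ} {B : Fin m → ℝ}
    (ha : 0 ≤ a) (hB : ∀ j, 0 ≤ B j)
    (hconv : Summable fun d => |term S i (vec a B) d|) :
    ENNReal.ofReal (Hval S (vec a B) i)
      = ∑' d : Fin (m + 1) → ℕ, ENNReal.ofReal (S.c i d) *
          (ENNReal.ofReal a ^ (d 0) * ∏ j : Fin m, ENNReal.ofReal (B j) ^ (d j.succ)) := by
  rw [show Hval S (vec a B) i = ∑' d, term S i (vec a B) d from rfl,
    ENNReal.ofReal_tsum_of_nonneg (term_nonneg S i (vec_nonneg ha hB))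
      (summable_abs_iff.mp hconv)]
  exact tsum_congr (ofReal_term S i ha hB)

lemma jacTerm_nonneg (S : PosSystem m) (i j : Fin m) {x : Fin (m + 1) → ℝ}
    (hx : ∀ k, 0 ≤ x k) (d : Fin (m + 1) → ℕ) : 0 ≤ jacTerm S i j x d :=
  mul_nonneg (mul_nonneg (S.nonneg i d) (Nat.cast_nonneg _))
    (Finset.prod_nonneg fun k _ => pow_nonneg (hx k) _)

lemma jac_nonneg (S : PosSystem m) (i j : Fin m) {x : Fin (m + 1) → ℝ}
    (hx : ∀ k, 0 ≤ x k) : 0 ≤ jac S x i j :=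
  tsum_nonneg (jacTerm_nonneg S i j hx)

lemma ofReal_jac (S : PosSystem m) (i j : Fin m) {Y0 : Fin m → ℝ} (hY0 : ∀ l, 0 ≤ Y0 l)
    (hs : Summable fun d => |jacTerm S i j (vec 0 Y0) d|) :
    ENNReal.ofReal (jac S (vec 0 Y0) i j)
      = JEnn S (fun l => ENNReal.ofReal (Y0 l)) i j := by
  have hx : ∀ k, 0 ≤ vec (0:ℝ) Y0 k := vec_nonneg le_rfl hY0
  rw [show jac S (vec 0 Y0) i j = ∑' d, jacTerm S i j (vec 0 Y0) d from rfl,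
    ENNReal.ofReal_tsum_of_nonneg (jacTerm_nonneg S i j hx) (summable_abs_iff.mp hs), JEnn]
  refine tsum_congr fun d => ?_
  rw [jacTerm]
  have hsplit : ∏ k : Fin (m + 1), (vec (0:ℝ) Y0) k ^ (if k = j.succ then d k - 1 else d k)
      = (0 : ℝ) ^ (d 0) * ∏ l : Fin m, (Y0 l) ^ (if l = j then d l.succ - 1 else d l.succ) := by
    rw [Fin.prod_univ_succ]
    simp only [vec, Fin.cons_zero, Fin.cons_succ]
    rw [if_neg ((Fin.succ_ne_zero j).symm : ¬ (0 : Fin (m+1)) = j.succ)]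
    congr 1
    refine Finset.prod_congr rfl fun l _ => ?_
    congr 1
    simp [Fin.succ_inj]
  rw [hsplit]
  have hwnn : (0:ℝ) ≤ (0 : ℝ) ^ (d 0) := pow_nonneg le_rfl _
  rw [ENNReal.ofReal_mul (mul_nonneg (S.nonneg i d) (Nat.cast_nonneg _)),
    ENNReal.ofReal_mul (S.nonneg i d), ENNReal.ofReal_mul hwnn,
    ENNReal.ofReal_pow (le_rfl : (0:ℝ) ≤ 0),
    ENNReal.ofReal_prod_of_nonneg (fun l _ => pow_nonneg (hY0 l) _)]
  rw [ENNReal.ofReal_natCast, ENNReal.ofReal_zero, wgt]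
  congr 1
  congr 1
  exact Finset.prod_congr rfl fun l _ => ENNReal.ofReal_pow (hY0 l) _

variable {S : PosSystem m}

/-- The solution as a family of `ℝ≥0∞` power series. -/
noncomputable def yE (sol : GFSol S) : Fin m → PowerSeries ℝ≥0∞ :=
  fun i => PowerSeries.mk fun n => ENNReal.ofReal (sol.y i n)

@[simp] lemma coeff_yE (sol : GFSol S) (i : Fin m) (n : ℕ) :
    coeff n (yE sol i) = ENNReal.ofReal (sol.y i n) := coeff_mk n _

lemma eval_nonneg (sol : GFSol S) {x : ℝ} (hx : 0 ≤ x) (i : Fin m) :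
    0 ≤ eval sol.y x i :=
  tsum_nonneg fun n => mul_nonneg (sol.nonneg i n) (pow_nonneg hx n)

lemma evv_yE (sol : GFSol S) {x : ℝ} (hx : 0 ≤ x) (i : Fin m)
    (hs : Summable fun n => sol.y i n * x ^ n) :
    evv (fun n => coeff n (yE sol i)) (ENNReal.ofReal x)
      = ENNReal.ofReal (eval sol.y x i) := by
  rw [evv, show eval sol.y x i = ∑' n, sol.y i n * x ^ n from rfl,
    ENNReal.ofReal_tsum_of_nonneg (fun n => mul_nonneg (sol.nonneg i n) (pow_nonneg hx n)) hs]
  exact tsum_congr fun n => by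
    rw [coeff_yE, ENNReal.ofReal_mul (sol.nonneg i n), ENNReal.ofReal_pow hx]

lemma summable_of_lt_radius {y : ℕ → ℝ} (hy : ∀ n, 0 ≤ y n) {x : ℝ} (hx : 0 ≤ x)
    (hlt : ENNReal.ofReal x < radius y) : Summable fun n => y n * x ^ n := by
  rw [radius, lt_iSup_iff] at hlt
  obtain ⟨r, hr⟩ := hlt
  rw [lt_iSup_iff] at hr
  obtain ⟨hsum, hxr⟩ := hr
  have hxr' : x ≤ (r : ℝ) := by
    have h1 : x.toNNReal < r := by
      rw [ENNReal.ofReal, ENNReal.coe_lt_coe] at hxr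
      exact hxr
    have h2 : ((x.toNNReal : ℝ)) = x := Real.coe_toNNReal x hx
    rw [← h2]
    exact le_of_lt (NNReal.coe_lt_coe.mpr h1)
  refine Summable.of_nonneg_of_le (fun n => mul_nonneg (hy n) (pow_nonneg hx n))
    (fun n => ?_) hsum
  calc y n * x ^ n ≤ y n * (r : ℝ) ^ n :=
        mul_le_mul_of_nonneg_left (pow_le_pow_left₀ hx hxr' n) (hy n)
    _ = |y n| * (r : ℝ) ^ n := by rw [abs_of_nonneg (hy n)]

lemma exists_x0 (sol : GFSol S) : ∃ x₀ : ℝ, 0 < x₀ ∧ ENNReal.ofReal x₀ < sol.rad := by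
  have hpos : 0 < sol.rad := sol.rad_pos
  set t := min sol.rad 1 with ht
  have ht0 : 0 < t := lt_min hpos zero_lt_one
  have htne : t ≠ ⊤ := by
    refine ne_top_of_le_ne_top ?_ (min_le_right _ _)
    exact ENNReal.one_ne_top
  have htr : 0 < t.toReal := ENNReal.toReal_pos ht0.ne' htne
  refine ⟨t.toReal / 2, by linarith, ?_⟩
  have h2 : ENNReal.ofReal (t.toReal / 2) = t / 2 := by
    rw [ENNReal.ofReal_div_of_pos two_pos, ENNReal.ofReal_toReal htne]
    norm_num
  rw [h2]
  exact lt_of_lt_of_le (ENNReal.half_lt_self ht0.ne' htne) (min_le_left _ _)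

lemma eval_zero (y : Fin m → ℕ → ℝ) (i : Fin m) : eval y 0 i = y i 0 := by
  rw [show eval y 0 i = ∑' n, y i n * (0:ℝ) ^ n from rfl, tsum_eq_single 0]
  · simp
  · intro n hn; simp [zero_pow hn]

lemma y0_eq_uIter (sol : GFSol S) : (fun j => sol.y j 0) = uIter S m := by
  funext j
  rw [← sol.init]
  exact (eval_zero sol.y j).symm

end Bridge

section Fixed
variable {m : ℕ} {S : PosSystem m}
open PowerSeries

lemma rad_le_radius (sol : GFSol S) (i : Fin m) : sol.rad ≤ radius (sol.y i) := by
  rw [GFSol.rad]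
  exact iInf_le _ i

/-- Evaluation of `HfP` at the solution equals the evaluation of the solution below `ρ`. -/
lemma evv_HfP_yE (sol : GFSol S) {x : ℝ} (hx : 0 < x) (hlt : ENNReal.ofReal x < sol.rad)
    (i : Fin m) :
    evv (HfP S (yE sol) i) (ENNReal.ofReal x) = ENNReal.ofReal (eval sol.y x i) := by
  have hsum : ∀ j, Summable fun n => sol.y j n * x ^ n := fun j =>
    summable_of_lt_radius (sol.nonneg j) hx.le (lt_of_lt_of_le hlt (rad_le_radius sol j))
  rw [evv_HfP]
  have h1 : ∀ j : Fin m, evv (fun n => coeff n (yE sol j)) (ENNReal.ofReal x)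
      = ENNReal.ofReal (eval sol.y x j) := fun j => evv_yE sol hx.le j (hsum j)
  calc (∑' d : Fin (m + 1) → ℕ, ENNReal.ofReal (S.c i d)
          * ((ENNReal.ofReal x) ^ (d 0)
            * ∏ j : Fin m, (evv (fun n => coeff n (yE sol j)) (ENNReal.ofReal x)) ^ (d j.succ)))
      = ∑' d : Fin (m + 1) → ℕ, ENNReal.ofReal (S.c i d)
          * ((ENNReal.ofReal x) ^ (d 0)
            * ∏ j : Fin m, (ENNReal.ofReal (eval sol.y x j)) ^ (d j.succ)) := by
        refine tsum_congr fun d => ?_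
        congr 1
        congr 1
        exact Finset.prod_congr rfl fun j _ => by rw [h1 j]
    _ = ENNReal.ofReal (Hval S (vec x (eval sol.y x)) i) :=
        (ofReal_Hval S i hx.le (fun j => eval_nonneg sol hx.le j)
          (sol.conv x hx.le hlt i)).symm
    _ = ENNReal.ofReal (eval sol.y x i) := by
        rw [← sol.fixed x hx.le hlt]

/-- The solution is a fixed point of the formal operator. -/
lemma HfP_yE (sol : GFSol S) (i : Fin m) (n : ℕ) :
    HfP S (yE sol) i n = ENNReal.ofReal (sol.y i n) := by
  obtain ⟨x₀, hx₀, hx₀lt⟩ := exists_x0 sol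
  have hxlt : ∀ x : ℝ, 0 < x → x ≤ x₀ → ENNReal.ofReal x < sol.rad := fun x hx hxx =>
    lt_of_le_of_lt (ENNReal.ofReal_le_ofReal hxx) hx₀lt
  -- finiteness of the coefficients
  have hfin : ∀ k, HfP S (yE sol) i k ≠ ⊤ := by
    intro k
    have hle : HfP S (yE sol) i k * (ENNReal.ofReal x₀) ^ k
        ≤ evv (HfP S (yE sol) i) (ENNReal.ofReal x₀) := ENNReal.le_tsum k
    rw [evv_HfP_yE sol hx₀ hx₀lt i] at hle
    intro htop
    rw [htop] at hle
    have hne : (ENNReal.ofReal x₀) ^ k ≠ 0 :=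
      pow_ne_zero k (by simpa [ENNReal.ofReal_pos] using hx₀)
    rw [ENNReal.top_mul hne] at hle
    exact (lt_irrefl ⊤ (lt_of_le_of_lt hle (ENNReal.ofReal_lt_top))).elim
  -- real sums agree on (0, x₀]
  have heq : ∀ x : ℝ, 0 < x → x ≤ x₀ →
      ∑' k, sol.y i k * x ^ k = ∑' k, (HfP S (yE sol) i k).toReal * x ^ k := by
    intro x hx hxx
    have hlt := hxlt x hx hxx
    have h1 := evv_HfP_yE sol hx hlt i
    have h2 : (evv (HfP S (yE sol) i) (ENNReal.ofReal x)).toReal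
        = ∑' k, (HfP S (yE sol) i k).toReal * x ^ k := by
      rw [evv, ENNReal.tsum_toReal_eq]
      · refine tsum_congr fun k => ?_
        rw [ENNReal.toReal_mul, ENNReal.toReal_pow, ENNReal.toReal_ofReal hx.le]
      · intro k
        exact ENNReal.mul_ne_top (hfin k) (ENNReal.pow_ne_top ENNReal.ofReal_ne_top)
    rw [← h2, h1, ENNReal.toReal_ofReal (eval_nonneg sol hx.le i)]
    rfl
  -- summability of the two coefficient sequences at x₀
  have hys : Summable fun k => sol.y i k * x₀ ^ k :=
    summable_of_lt_radius (sol.nonneg i) hx₀.le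
      (lt_of_lt_of_le hx₀lt (rad_le_radius sol i))
  have hgs : Summable fun k => (HfP S (yE sol) i k).toReal * x₀ ^ k := by
    have h3 : (∑' k, HfP S (yE sol) i k * (ENNReal.ofReal x₀) ^ k) ≠ ⊤ := by
      rw [show (∑' k, HfP S (yE sol) i k * (ENNReal.ofReal x₀) ^ k)
          = evv (HfP S (yE sol) i) (ENNReal.ofReal x₀) from rfl,
        evv_HfP_yE sol hx₀ hx₀lt i]
      exact ENNReal.ofReal_ne_top
    have h4 := ENNReal.summable_toReal h3
    refine h4.congr fun k => ?_
    rw [ENNReal.toReal_mul, ENNReal.toReal_pow, ENNReal.toReal_ofReal hx₀.le]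
  have := unique_coeffs (sol.nonneg i) (fun k => ENNReal.toReal_nonneg) hx₀ hys hgs heq n
  rw [← ENNReal.ofReal_toReal (hfin n), ← this]

/-- Monotonicity of `HfP` in the coefficients. -/
lemma HfP_mono {F F' : Fin m → PowerSeries ℝ≥0∞}
    (h : ∀ j k, coeff k (F j) ≤ coeff k (F' j)) (i : Fin m) (n : ℕ) :
    HfP S F i n ≤ HfP S F' i n := by
  refine Summable.tsum_le_tsum (fun d => mul_le_mul_right ?_ _) ENNReal.summable ENNReal.summable
  rw [monE, monE, coeff_X_pow_mul', coeff_X_pow_mul']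
  by_cases hdn : d 0 ≤ n
  · rw [if_pos hdn, if_pos hdn]
    exact coeff_prodl_mono (fun t _ k => h t k) _
  · rw [if_neg hdn, if_neg hdn]

/-- The formal iterates. -/
noncomputable def PitP (S : PosSystem m) : ℕ → Fin m → PowerSeries ℝ≥0∞
  | 0 => fun _ => 0
  | k + 1 => fun i => PowerSeries.mk fun n => HfP S (PitP S k) i n

@[simp] lemma coeff_PitP_zero (i : Fin m) (n : ℕ) :
    coeff n (PitP S 0 i) = 0 := by
  rw [show PitP S 0 i = 0 from rfl, map_zero]

@[simp] lemma coeff_PitP_succ (k : ℕ) (i : Fin m) (n : ℕ) :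
    coeff n (PitP S (k + 1) i) = HfP S (PitP S k) i n := coeff_mk n _

lemma PitP_le_yE (sol : GFSol S) : ∀ k i n, coeff n (PitP S k i) ≤ coeff n (yE sol i) := by
  intro k
  induction k with
  | zero => intro i n; rw [coeff_PitP_zero]; exact zero_le
  | succ k ih =>
    intro i n
    rw [coeff_PitP_succ, coeff_yE, ← HfP_yE sol i n]
    exact HfP_mono (fun j kk => ih j kk) i n

end Fixed

section Stab
variable {m : ℕ} {S : PosSystem m}
open PowerSeries

lemma coeff_PitP_ne_top (sol : GFSol S) (k : ℕ) (i : Fin m) (n : ℕ) :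
    coeff n (PitP S k i) ≠ ⊤ := by
  have h := PitP_le_yE sol k i n
  rw [coeff_yE] at h
  exact (lt_of_le_of_lt h ENNReal.ofReal_lt_top).ne

lemma coeff_PitP_eq_ofReal (sol : GFSol S) (k : ℕ) (i : Fin m) (n : ℕ) :
    coeff n (PitP S k i) = ENNReal.ofReal ((coeff n (PitP S k i)).toReal) :=
  (ENNReal.ofReal_toReal (coeff_PitP_ne_top sol k i n)).symm

lemma toReal_coeff_PitP_le (sol : GFSol S) (k : ℕ) (i : Fin m) (n : ℕ) :
    (coeff n (PitP S k i)).toReal ≤ sol.y i n := by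
  have h := PitP_le_yE sol k i n
  rw [coeff_yE] at h
  have h2 := ENNReal.toReal_mono ENNReal.ofReal_ne_top h
  rwa [ENNReal.toReal_ofReal (sol.nonneg i n)] at h2

lemma JEnn_yE (sol : GFSol S) (hwf : IsWF S) (i j : Fin m) :
    JEnn S (fun l => coeff 0 (yE sol l)) i j
      = ENNReal.ofReal (jac S (vec 0 (fun l => sol.y l 0)) i j) := by
  have hs : Summable fun d => |jacTerm S i j (vec 0 (fun l => sol.y l 0)) d| := by
    have h := hwf.2.1 i j
    rwa [← y0_eq_uIter sol] at h
  have h2 := ofReal_jac S i j (fun l => sol.nonneg l 0) hs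
  have h3 : (fun l => coeff 0 (yE sol l)) = (fun l => ENNReal.ofReal (sol.y l 0)) :=
    funext fun l => coeff_yE sol l 0
  rw [h3, h2]

lemma ofReal_linsum (J w : Fin m → ℝ) (hJ : ∀ j, 0 ≤ J j) (hw : ∀ j, 0 ≤ w j) :
    ∑ j : Fin m, ENNReal.ofReal (J j) * ENNReal.ofReal (w j)
      = ENNReal.ofReal (∑ j : Fin m, J j * w j) := by
  rw [ENNReal.ofReal_sum_of_nonneg (fun j _ => mul_nonneg (hJ j) (hw j))]
  exact Finset.sum_congr rfl fun j _ => (ENNReal.ofReal_mul (hJ j)).symm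

lemma real_of_key_le {a b : ℝ} (ha : 0 ≤ a) (hb : 0 ≤ b) (J w u : Fin m → ℝ)
    (hJ : ∀ j, 0 ≤ J j) (hw : ∀ j, 0 ≤ w j) (hu : ∀ j, 0 ≤ u j)
    (h : ENNReal.ofReal a + ∑ j : Fin m, ENNReal.ofReal (J j) * ENNReal.ofReal (w j)
       ≤ ENNReal.ofReal b + ∑ j : Fin m, ENNReal.ofReal (J j) * ENNReal.ofReal (u j)) :
    a + ∑ j : Fin m, J j * w j ≤ b + ∑ j : Fin m, J j * u j := by
  rw [ofReal_linsum J w hJ hw, ofReal_linsum J u hJ hu,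
    ← ENNReal.ofReal_add ha (Finset.sum_nonneg fun j _ => mul_nonneg (hJ j) (hw j)),
    ← ENNReal.ofReal_add hb (Finset.sum_nonneg fun j _ => mul_nonneg (hJ j) (hu j)),
    ENNReal.ofReal_le_ofReal_iff
      (add_nonneg hb (Finset.sum_nonneg fun j _ => mul_nonneg (hJ j) (hu j)))] at h
  exact h

lemma real_of_key_eq {a b : ℝ} (ha : 0 ≤ a) (hb : 0 ≤ b) (J w u : Fin m → ℝ)
    (hJ : ∀ j, 0 ≤ J j) (hw : ∀ j, 0 ≤ w j) (hu : ∀ j, 0 ≤ u j)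
    (h : ENNReal.ofReal a + ∑ j : Fin m, ENNReal.ofReal (J j) * ENNReal.ofReal (w j)
       = ENNReal.ofReal b + ∑ j : Fin m, ENNReal.ofReal (J j) * ENNReal.ofReal (u j)) :
    a + ∑ j : Fin m, J j * w j = b + ∑ j : Fin m, J j * u j := by
  rw [ofReal_linsum J w hJ hw, ofReal_linsum J u hJ hu,
    ← ENNReal.ofReal_add ha (Finset.sum_nonneg fun j _ => mul_nonneg (hJ j) (hw j)),
    ← ENNReal.ofReal_add hb (Finset.sum_nonneg fun j _ => mul_nonneg (hJ j) (hu j)),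
    ENNReal.ofReal_eq_ofReal_iff
      (add_nonneg ha (Finset.sum_nonneg fun j _ => mul_nonneg (hJ j) (hw j)))
      (add_nonneg hb (Finset.sum_nonneg fun j _ => mul_nonneg (hJ j) (hu j)))] at h
  exact h

lemma real_of_key_le' {A B : ℝ≥0∞} (hA : A ≠ ⊤) (hB : B ≠ ⊤) (J : Fin m → ℝ)
    (w u : Fin m → ℝ≥0∞) (hJ : ∀ j, 0 ≤ J j) (hw : ∀ j, w j ≠ ⊤) (hu : ∀ j, u j ≠ ⊤)
    (h : A + ∑ j : Fin m, ENNReal.ofReal (J j) * w j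
       ≤ B + ∑ j : Fin m, ENNReal.ofReal (J j) * u j) :
    A.toReal + ∑ j : Fin m, J j * (w j).toReal
      ≤ B.toReal + ∑ j : Fin m, J j * (u j).toReal := by
  have hrw : ∀ (v : Fin m → ℝ≥0∞), (∀ j, v j ≠ ⊤) →
      ∑ j : Fin m, ENNReal.ofReal (J j) * v j
        = ∑ j : Fin m, ENNReal.ofReal (J j) * ENNReal.ofReal ((v j).toReal) := fun v hv =>
    Finset.sum_congr rfl fun j _ => by rw [ENNReal.ofReal_toReal (hv j)]
  rw [hrw w hw, hrw u hu, ← ENNReal.ofReal_toReal hA, ← ENNReal.ofReal_toReal hB] at h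
  exact real_of_key_le ENNReal.toReal_nonneg ENNReal.toReal_nonneg J _ _ hJ
    (fun j => ENNReal.toReal_nonneg) (fun j => ENNReal.toReal_nonneg) h

lemma real_of_key_eq' {A B : ℝ≥0∞} (hA : A ≠ ⊤) (hB : B ≠ ⊤) (J : Fin m → ℝ)
    (w u : Fin m → ℝ≥0∞) (hJ : ∀ j, 0 ≤ J j) (hw : ∀ j, w j ≠ ⊤) (hu : ∀ j, u j ≠ ⊤)
    (h : A + ∑ j : Fin m, ENNReal.ofReal (J j) * w j
       = B + ∑ j : Fin m, ENNReal.ofReal (J j) * u j) :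
    A.toReal + ∑ j : Fin m, J j * (w j).toReal
      = B.toReal + ∑ j : Fin m, J j * (u j).toReal := by
  have hrw : ∀ (v : Fin m → ℝ≥0∞), (∀ j, v j ≠ ⊤) →
      ∑ j : Fin m, ENNReal.ofReal (J j) * v j
        = ∑ j : Fin m, ENNReal.ofReal (J j) * ENNReal.ofReal ((v j).toReal) := fun v hv =>
    Finset.sum_congr rfl fun j _ => by rw [ENNReal.ofReal_toReal (hv j)]
  rw [hrw w hw, hrw u hu, ← ENNReal.ofReal_toReal hA, ← ENNReal.ofReal_toReal hB] at h
  exact real_of_key_eq ENNReal.toReal_nonneg ENNReal.toReal_nonneg J _ _ hJ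
    (fun j => ENNReal.toReal_nonneg) (fun j => ENNReal.toReal_nonneg) h

/-- Coefficientwise stabilization of the formal iterates to the solution. -/
lemma stab (sol : GFSol S) (hwf : IsWF S) :
    ∀ N : ℕ, ∃ K : ℕ, ∀ k, K ≤ k → ∀ i : Fin m, ∀ n, n ≤ N →
      coeff n (PitP S k i) = coeff n (yE sol i) := by
  classical
  set Jr := jac S (vec 0 (fun l => sol.y l 0)) with hJrdef
  have hy00 : ∀ l, (0:ℝ) ≤ sol.y l 0 := fun l => sol.nonneg l 0
  have hJr0 : ∀ i j, 0 ≤ Jr i j := fun i j => jac_nonneg S i j (vec_nonneg le_rfl hy00)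
  obtain ⟨p, hp⟩ : ∃ p, Jr ^ p = 0 := by
    obtain ⟨p, hp⟩ := hwf.2.2
    refine ⟨p, ?_⟩
    rw [hJrdef, y0_eq_uIter sol]
    exact hp
  have hJE : ∀ i j, JEnn S (fun l => coeff 0 (yE sol l)) i j = ENNReal.ofReal (Jr i j) :=
    JEnn_yE sol hwf
  have hJrpow : ∀ k i j, 0 ≤ (Jr ^ k) i j := by
    intro k
    induction k with
    | zero =>
      intro i j
      by_cases hij : i = j <;> simp [Matrix.one_apply, hij]
    | succ k ih =>
      intro i j
      rw [pow_succ, Matrix.mul_apply]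
      exact Finset.sum_nonneg fun l _ => mul_nonneg (ih i l) (hJr0 l j)
  -- generic vanishing of iterated differences
  have key_vanish : ∀ (dv : ℕ → Fin m → ℝ), (∀ k j, 0 ≤ dv k j) →
      (∀ k i, dv (k+1) i ≤ ∑ j : Fin m, Jr i j * dv k j) →
      ∀ k, p ≤ k → ∀ i, dv k i = 0 := by
    intro dv hdv0 hdrec
    have hiter : ∀ k i, dv k i ≤ (Jr ^ k).mulVec (dv 0) i := by
      intro k
      induction k with
      | zero =>
        intro i
        rw [pow_zero, Matrix.one_mulVec]
      | succ k ih =>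
        intro i
        refine le_trans (hdrec k i) ?_
        have h2 : ∑ j : Fin m, Jr i j * dv k j
            ≤ ∑ j : Fin m, Jr i j * ((Jr ^ k).mulVec (dv 0) j) :=
          Finset.sum_le_sum fun j _ => mul_le_mul_of_nonneg_left (ih j) (hJr0 i j)
        refine le_trans h2 ?_
        rw [pow_succ', ← Matrix.mulVec_mulVec]
        exact le_of_eq rfl
    intro k hk i
    obtain ⟨t, ht⟩ : ∃ t, k = p + t := ⟨k - p, by omega⟩
    have h4 : (Jr ^ k) = 0 := by rw [ht, pow_add, hp, Matrix.zero_mul]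
    have h3 := hiter k i
    rw [h4, Matrix.zero_mulVec] at h3
    exact le_antisymm (by simpa using h3) (hdv0 k i)
  -- main induction on N
  intro N
  induction N with
  | zero =>
    refine ⟨p, fun k hk i n hn => ?_⟩
    interval_cases n
    -- constant coefficients
    have hdrec : ∀ k i, (sol.y i 0 - (coeff 0 (PitP S (k+1) i)).toReal)
        ≤ ∑ j : Fin m, Jr i j * (sol.y j 0 - (coeff 0 (PitP S k j)).toReal) := by
      intro k i
      have h1 := HfP_key0 S (F := yE sol) (G := PitP S k) (fun j => PitP_le_yE sol k j 0) i
      rw [HfP_yE sol i 0, ← coeff_PitP_succ k i 0] at h1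
      simp only [hJE] at h1
      simp only [coeff_yE] at h1
      have h2 := real_of_key_le' ENNReal.ofReal_ne_top (coeff_PitP_ne_top sol (k+1) i 0)
        (fun j => Jr i j) (fun j => coeff 0 (PitP S k j))
        (fun j => ENNReal.ofReal (sol.y j 0)) (hJr0 i)
        (fun j => coeff_PitP_ne_top sol k j 0) (fun j => ENNReal.ofReal_ne_top) h1
      rw [ENNReal.toReal_ofReal (sol.nonneg i 0)] at h2
      have h4 : ∑ j : Fin m, Jr i j * (ENNReal.ofReal (sol.y j 0)).toReal
          = ∑ j : Fin m, Jr i j * sol.y j 0 :=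
        Finset.sum_congr rfl fun j _ => by rw [ENNReal.toReal_ofReal (hy00 j)]
      rw [h4] at h2
      have h3 : ∑ j : Fin m, Jr i j * (sol.y j 0 - (coeff 0 (PitP S k j)).toReal)
          = ∑ j : Fin m, Jr i j * sol.y j 0
            - ∑ j : Fin m, Jr i j * (coeff 0 (PitP S k j)).toReal := by
        rw [← Finset.sum_sub_distrib]
        exact Finset.sum_congr rfl fun j _ => by ring
      rw [h3]
      linarith
    have hvan := key_vanish (fun k j => sol.y j 0 - (coeff 0 (PitP S k j)).toReal)
      (fun k j => by simpa using sub_nonneg.mpr (toReal_coeff_PitP_le sol k j 0)) hdrec k hk i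
    have : (coeff 0 (PitP S k i)).toReal = sol.y i 0 := by linarith
    rw [coeff_PitP_eq_ofReal sol k i 0, this, coeff_yE]
  | succ N ihN =>
    obtain ⟨K₀, hK₀⟩ := ihN
    refine ⟨K₀ + p, fun k hk i n hn => ?_⟩
    rcases Nat.lt_or_ge n (N+1) with hn' | hn'
    · exact hK₀ k (by omega) i n (by omega)
    have hnN : n = N + 1 := by omega
    subst hnN
    -- exact recursion for the top coefficient, for iterates beyond K₀
    have hdrec : ∀ k i, (sol.y i (N+1) - (coeff (N+1) (PitP S (K₀ + k + 1) i)).toReal)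
        = ∑ j : Fin m, Jr i j *
            (sol.y j (N+1) - (coeff (N+1) (PitP S (K₀ + k) j)).toReal) := by
      intro k i
      have hlow : ∀ j : Fin m, ∀ kk, kk < N + 1 →
          coeff kk (yE sol j) = coeff kk (PitP S (K₀ + k) j) :=
        fun j kk hkk => (hK₀ (K₀ + k) (by omega) j kk (by omega)).symm
      have h1 := HfP_key S (F := yE sol) (G := PitP S (K₀ + k)) (Nat.succ_pos N) hlow i
      rw [HfP_yE sol i (N+1), ← coeff_PitP_succ (K₀ + k) i (N+1)] at h1
      simp only [hJE] at h1
      simp only [coeff_yE] at h1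
      have h2 := real_of_key_eq' ENNReal.ofReal_ne_top
        (coeff_PitP_ne_top sol (K₀ + k + 1) i (N+1))
        (fun j => Jr i j) (fun j => coeff (N+1) (PitP S (K₀ + k) j))
        (fun j => ENNReal.ofReal (sol.y j (N+1))) (hJr0 i)
        (fun j => coeff_PitP_ne_top sol (K₀ + k) j (N+1))
        (fun j => ENNReal.ofReal_ne_top) h1
      rw [ENNReal.toReal_ofReal (sol.nonneg i (N+1))] at h2
      have h4 : ∑ j : Fin m, Jr i j * (ENNReal.ofReal (sol.y j (N+1))).toReal
          = ∑ j : Fin m, Jr i j * sol.y j (N+1) :=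
        Finset.sum_congr rfl fun j _ => by rw [ENNReal.toReal_ofReal (sol.nonneg j (N+1))]
      rw [h4] at h2
      have h3 : ∑ j : Fin m, Jr i j *
            (sol.y j (N+1) - (coeff (N+1) (PitP S (K₀ + k) j)).toReal)
          = ∑ j : Fin m, Jr i j * sol.y j (N+1)
            - ∑ j : Fin m, Jr i j * (coeff (N+1) (PitP S (K₀ + k) j)).toReal := by
        rw [← Finset.sum_sub_distrib]
        exact Finset.sum_congr rfl fun j _ => by ring
      rw [h3]
      linarith
    -- apply vanishing to the shifted sequence
    have hvan := key_vanish
      (fun k j => sol.y j (N+1) - (coeff (N+1) (PitP S (K₀ + k) j)).toReal)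
      (fun k j => by simpa using sub_nonneg.mpr (toReal_coeff_PitP_le sol (K₀ + k) j (N+1)))
      (fun k i => by
        show sol.y i (N+1) - (coeff (N+1) (PitP S (K₀ + (k+1)) i)).toReal
          ≤ ∑ j : Fin m, Jr i j *
              (sol.y j (N+1) - (coeff (N+1) (PitP S (K₀ + k) j)).toReal)
        rw [show K₀ + (k + 1) = K₀ + k + 1 from by omega]
        exact le_of_eq (hdrec k i))
      (k - K₀) (by omega) i
    rw [show K₀ + (k - K₀) = k by omega] at hvan
    have : (coeff (N+1) (PitP S k i)).toReal = sol.y i (N+1) := by linarith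
    rw [coeff_PitP_eq_ofReal sol k i (N+1), this, coeff_yE]

end Stab

section Final
variable {m : ℕ}
open PowerSeries

lemma evv_PitP_le (S : PosSystem m) {a : ℝ} {B : Fin m → ℝ} (ha : 0 ≤ a) (hB : ∀ j, 0 ≤ B j)
    (hconv : ConvAt S (vec a B)) (hfix : B = Hval S (vec a B)) :
    ∀ k i, evv (fun n => coeff n (PitP S k i)) (ENNReal.ofReal a)
      ≤ ENNReal.ofReal (B i) := by
  intro k
  induction k with
  | zero =>
    intro i
    rw [evv]
    simp
  | succ k ih =>
    intro i
    have hcoeff : (fun n => coeff n (PitP S (k+1) i)) = HfP S (PitP S k) i := by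
      funext n; exact coeff_PitP_succ k i n
    rw [hcoeff, evv_HfP]
    have hle : (∑' d : Fin (m + 1) → ℕ, ENNReal.ofReal (S.c i d)
          * ((ENNReal.ofReal a) ^ (d 0)
            * ∏ j : Fin m, (evv (fun n => coeff n (PitP S k j)) (ENNReal.ofReal a)) ^ (d j.succ)))
        ≤ ∑' d : Fin (m + 1) → ℕ, ENNReal.ofReal (S.c i d)
          * ((ENNReal.ofReal a) ^ (d 0)
            * ∏ j : Fin m, (ENNReal.ofReal (B j)) ^ (d j.succ)) := by
      refine Summable.tsum_le_tsum (fun d => ?_) ENNReal.summable ENNReal.summable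
      refine mul_le_mul_right (mul_le_mul_right ?_ _) _
      exact Finset.prod_le_prod' fun j _ => pow_le_pow_left' (ih j) _
    refine le_trans hle ?_
    rw [← ofReal_Hval S i ha hB (hconv i), ← congrFun hfix i]

end Final

end S4

/-- For a zero-free well-founded system, any nonnegative solution `(a,B)` of
`B = H(a,B)` inside `D(H)` satisfies `a ≤ ρ` and `Y(a) ≤ B`. -/
theorem statement4 (m : ℕ) (hm : 1 ≤ m) (S : PosSystem m) (sol : GFSol S)
    (hwf : IsWF S) (hzf : sol.ZeroFree)
    (a : ℝ) (ha : 0 ≤ a) (B : Fin m → ℝ) (hB : ∀ i, 0 ≤ B i)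
    (hconv : ConvAt S (vec a B)) (hfix : B = Hval S (vec a B)) :
    ENNReal.ofReal a ≤ sol.rad ∧ EvalConv sol.y a ∧ ∀ i, eval sol.y a i ≤ B i := by
  have key : ∀ (i : Fin m) (N : ℕ), ∑ n ∈ Finset.range N, sol.y i n * a ^ n ≤ B i := by
    intro i N
    obtain ⟨K, hK⟩ := S4.stab sol hwf N
    have h1 : ∑ n ∈ Finset.range N, ENNReal.ofReal (sol.y i n * a ^ n)
        ≤ ENNReal.ofReal (B i) := by
      have h2 : ∀ n ∈ Finset.range N, ENNReal.ofReal (sol.y i n * a ^ n)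
          = PowerSeries.coeff n (S4.PitP S K i) * (ENNReal.ofReal a) ^ n := by
        intro n hn
        rw [hK K le_rfl i n (le_of_lt (Finset.mem_range.mp hn)), S4.coeff_yE,
          ENNReal.ofReal_mul (sol.nonneg i n), ENNReal.ofReal_pow ha]
      rw [Finset.sum_congr rfl h2]
      refine le_trans ?_ (S4.evv_PitP_le S ha hB hconv hfix K i)
      rw [S4.evv]
      exact Summable.sum_le_tsum (Finset.range N) (fun n _ => zero_le) ENNReal.summable
    rw [← ENNReal.ofReal_sum_of_nonneg
      (fun n _ => mul_nonneg (sol.nonneg i n) (pow_nonneg ha n))] at h1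
    exact (ENNReal.ofReal_le_ofReal_iff (hB i)).mp h1
  have hsummable : ∀ i, Summable fun n => sol.y i n * a ^ n := fun i =>
    summable_of_sum_range_le (fun n => mul_nonneg (sol.nonneg i n) (pow_nonneg ha n)) (key i)
  refine ⟨?_, hsummable, ?_⟩
  · rw [GFSol.rad]
    refine le_iInf fun i => ?_
    rw [radius]
    have hsum' : Summable fun n => |sol.y i n| * ((a.toNNReal : ℝ≥0) : ℝ) ^ n := by
      refine (hsummable i).congr fun n => ?_
      rw [abs_of_nonneg (sol.nonneg i n), Real.coe_toNNReal a ha]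
    have hcoe : ENNReal.ofReal a = ((a.toNNReal : ℝ≥0) : ℝ≥0∞) := rfl
    rw [hcoe]
    exact le_iSup₂ (f := fun (r : ℝ≥0) (_ : Summable fun n => |sol.y i n| * (r : ℝ) ^ n) =>
      (r : ℝ≥0∞)) a.toNNReal hsum'
  · intro i
    exact Summable.tsum_le_of_sum_range_le (hsummable i) (key i)

end AnalyticComb
end

section
/- Let H be a positive analytic system, let a ≥ 0, and let t, y ∈ ℝ^m with 0 ≤ t ≤ y componentwise and (a,y) ∈ D(H). Then, componentwise and in [0,+∞] (with the convention ∞·0 = 0, the Jacobian entries being the sums in [0,+∞] of the termwise-differentiated series), H(a,y) − H(a,t) ≤ ½·(∂H/∂Y(a,t) + ∂H/∂Y(a,y))·(y − t). -/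
open scoped ENNReal NNReal Topology
open Filter

namespace AnalyticComb

variable {m : ℕ}

private lemma cheb {a b A B : ℝ} (ha : 0 ≤ a) (hA : 0 ≤ A) (hab : a ≤ b) (hAB : A ≤ B) :
    (a + b) * (A + B) ≤ 2 * (a * A + b * B) := by nlinarith

private lemma pow_diff_le (u v : ℝ) (hu : 0 ≤ u) (huv : u ≤ v) (n : ℕ) :
    2 * (v ^ n - u ^ n) ≤ (n : ℝ) * (u ^ (n - 1) + v ^ (n - 1)) * (v - u) := by
  induction n with
  | zero => simp
  | succ n ih =>
    rcases Nat.eq_zero_or_pos n with rfl | hn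
    · norm_num
    · have hv : 0 ≤ v := hu.trans huv
      have h1 : u ^ (n - 1) ≤ v ^ (n - 1) := pow_le_pow_left₀ hu huv _
      have h2 : u ^ n ≤ v ^ n := pow_le_pow_left₀ hu huv _
      have hun : u * u ^ (n - 1) = u ^ n := by
        rw [← pow_succ']; congr 1; omega
      have hvn : v * v ^ (n - 1) = v ^ n := by
        rw [← pow_succ']; congr 1; omega
      have e1 : 2 * (v ^ (n + 1) - u ^ (n + 1)) =
          (u + v) * (v ^ n - u ^ n) + (v - u) * (u ^ n + v ^ n) := by ring
      have e2 : (u + v) * (2 * (v ^ n - u ^ n)) ≤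
          (u + v) * ((n : ℝ) * (u ^ (n - 1) + v ^ (n - 1)) * (v - u)) :=
        mul_le_mul_of_nonneg_left ih (by linarith)
      have e3 : (u + v) * (u ^ (n - 1) + v ^ (n - 1)) ≤ 2 * (u ^ n + v ^ n) := by
        have := cheb hu (pow_nonneg hu (n-1)) huv h1
        nlinarith
      have e4 : (0:ℝ) ≤ (n : ℝ) * (v - u) := mul_nonneg (Nat.cast_nonneg n) (by linarith)
      have e5 : (u + v) * ((n : ℝ) * (u ^ (n - 1) + v ^ (n - 1)) * (v - u)) =
          ((n:ℝ) * (v - u)) * ((u + v) * (u ^ (n - 1) + v ^ (n - 1))) := by ring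
      have e6 : ((n:ℝ) * (v - u)) * ((u + v) * (u ^ (n - 1) + v ^ (n - 1))) ≤
          ((n:ℝ) * (v - u)) * (2 * (u ^ n + v ^ n)) :=
        mul_le_mul_of_nonneg_left e3 e4
      push_cast
      nlinarith

private lemma prod_key {ι : Type*} [DecidableEq ι] (u v : ι → ℝ) (d : ι → ℕ)
    (hu : ∀ k, 0 ≤ u k) (huv : ∀ k, u k ≤ v k) (s : Finset ι) :
    2 * ((∏ k ∈ s, v k ^ d k) - ∏ k ∈ s, u k ^ d k) ≤
      ∑ j ∈ s, (d j : ℝ) * (v j - u j) *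
        ((∏ k ∈ s, u k ^ (if k = j then d k - 1 else d k)) +
         (∏ k ∈ s, v k ^ (if k = j then d k - 1 else d k))) := by
  have hv : ∀ k, 0 ≤ v k := fun k => (hu k).trans (huv k)
  induction s using Finset.induction_on with
  | empty => simp
  | @insert a s ha ih =>

    set Pu := ∏ k ∈ s, u k ^ d k with hPu
    set Pv := ∏ k ∈ s, v k ^ d k with hPv
    have hPu0 : 0 ≤ Pu := Finset.prod_nonneg fun k _ => pow_nonneg (hu k) _
    have hPv0 : 0 ≤ Pv := Finset.prod_nonneg fun k _ => pow_nonneg (hv k) _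
    have hPuv : Pu ≤ Pv := Finset.prod_le_prod
      (fun k _ => pow_nonneg (hu k) _) (fun k _ => pow_le_pow_left₀ (hu k) (huv k) _)
    -- rewrite products over insert
    rw [Finset.prod_insert ha, Finset.prod_insert ha, Finset.sum_insert ha]
    have hQa : ∀ x : ι → ℝ, (∏ k ∈ insert a s, x k ^ (if k = a then d k - 1 else d k)) =
        x a ^ (d a - 1) * ∏ k ∈ s, x k ^ d k := by
      intro x
      rw [Finset.prod_insert ha, if_pos rfl]
      congr 1
      exact Finset.prod_congr rfl fun k hk => by
        rw [if_neg]; rintro rfl; exact ha hk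
    have hQj : ∀ (x : ι → ℝ) j, j ∈ s →
        (∏ k ∈ insert a s, x k ^ (if k = j then d k - 1 else d k)) =
        x a ^ d a * ∏ k ∈ s, x k ^ (if k = j then d k - 1 else d k) := by
      intro x j hj
      rw [Finset.prod_insert ha, if_neg (by rintro rfl; exact ha hj)]
    rw [hQa u, hQa v, ← hPu, ← hPv]
    have hsum : ∀ x : ι → ℝ, ∀ j ∈ s,
        (d j : ℝ) * (v j - u j) *
          ((∏ k ∈ insert a s, u k ^ (if k = j then d k - 1 else d k)) +
           (∏ k ∈ insert a s, v k ^ (if k = j then d k - 1 else d k))) =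
        (d j : ℝ) * (v j - u j) *
          (u a ^ d a * (∏ k ∈ s, u k ^ (if k = j then d k - 1 else d k)) +
           v a ^ d a * (∏ k ∈ s, v k ^ (if k = j then d k - 1 else d k))) := by
      intro x j hj
      rw [hQj u j hj, hQj v j hj]
    rw [Finset.sum_congr rfl (hsum u)]
    set Qu := fun j => ∏ k ∈ s, u k ^ (if k = j then d k - 1 else d k) with hQu
    set Qv := fun j => ∏ k ∈ s, v k ^ (if k = j then d k - 1 else d k) with hQv
    -- Part B : single variable bound times (Pu + Pv)
    have hsingle := pow_diff_le (u a) (v a) (hu a) (huv a) (d a)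
    have hB : (v a ^ d a - u a ^ d a) * (Pu + Pv) ≤
        (d a : ℝ) * (v a - u a) * (u a ^ (d a - 1) * Pu + v a ^ (d a - 1) * Pv) := by
      have c1 := cheb (pow_nonneg (hu a) (d a - 1)) hPu0
        (pow_le_pow_left₀ (hu a) (huv a) _) hPuv
      have c2 : 2 * ((v a ^ d a - u a ^ d a) * (Pu + Pv)) ≤
          ((d a : ℝ) * (u a ^ (d a - 1) + v a ^ (d a - 1)) * (v a - u a)) * (Pu + Pv) := by
        have := mul_le_mul_of_nonneg_right hsingle (by linarith : (0:ℝ) ≤ Pu + Pv)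
        linarith [this]
      have c3 : ((d a : ℝ) * (v a - u a)) *
          ((u a ^ (d a - 1) + v a ^ (d a - 1)) * (Pu + Pv)) ≤
          ((d a : ℝ) * (v a - u a)) *
          (2 * (u a ^ (d a - 1) * Pu + v a ^ (d a - 1) * Pv)) :=
        mul_le_mul_of_nonneg_left c1
          (mul_nonneg (Nat.cast_nonneg _) (by linarith [huv a]))
      nlinarith [c2, c3]
    -- Part A : induction hypothesis
    have hA : (u a ^ d a + v a ^ d a) * (Pv - Pu) ≤
        ∑ j ∈ s, (d j : ℝ) * (v j - u j) * (u a ^ d a * Qu j + v a ^ d a * Qv j) := by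
      have hterm : ∀ j ∈ s,
          (u a ^ d a + v a ^ d a) * (2⁻¹ * ((d j : ℝ) * (v j - u j) * (Qu j + Qv j))) ≤
          (d j : ℝ) * (v j - u j) * (u a ^ d a * Qu j + v a ^ d a * Qv j) := by
        intro j hj
        have hQu0 : 0 ≤ Qu j := Finset.prod_nonneg fun k _ => pow_nonneg (hu k) _
        have hQuv : Qu j ≤ Qv j := Finset.prod_le_prod
          (fun k _ => pow_nonneg (hu k) _) (fun k _ => pow_le_pow_left₀ (hu k) (huv k) _)
        have c1 := cheb (pow_nonneg (hu a) (d a)) hQu0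
          (pow_le_pow_left₀ (hu a) (huv a) _) hQuv
        have hd : (0:ℝ) ≤ (d j : ℝ) * (v j - u j) :=
          mul_nonneg (Nat.cast_nonneg _) (by linarith [huv j])
        nlinarith [mul_le_mul_of_nonneg_left c1 hd]
      have h2 : (u a ^ d a + v a ^ d a) * (Pv - Pu) ≤
          (u a ^ d a + v a ^ d a) *
            (2⁻¹ * ∑ j ∈ s, (d j : ℝ) * (v j - u j) * (Qu j + Qv j)) := by
        have hnn : (0:ℝ) ≤ u a ^ d a + v a ^ d a := add_nonneg (pow_nonneg (hu a) _) (pow_nonneg (hv a) _)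
        have := mul_le_mul_of_nonneg_left (by linarith [ih] : Pv - Pu ≤
          2⁻¹ * ∑ j ∈ s, (d j : ℝ) * (v j - u j) * (Qu j + Qv j)) hnn
        exact this
      calc (u a ^ d a + v a ^ d a) * (Pv - Pu) ≤ _ := h2
        _ = ∑ j ∈ s, (u a ^ d a + v a ^ d a) *
              (2⁻¹ * ((d j : ℝ) * (v j - u j) * (Qu j + Qv j))) := by
            rw [Finset.mul_sum, Finset.mul_sum]
        _ ≤ _ := Finset.sum_le_sum hterm
    have key : 2 * (v a ^ d a * Pv - u a ^ d a * Pu) =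
        (u a ^ d a + v a ^ d a) * (Pv - Pu) + (v a ^ d a - u a ^ d a) * (Pu + Pv) := by
      ring
    linarith [hA, hB]


private lemma statement7.vec_nonneg {m : ℕ} (a : ℝ) (ha : 0 ≤ a) (t : Fin m → ℝ)
    (ht : ∀ i, 0 ≤ t i) : ∀ k, 0 ≤ vec a t k := by
  intro k
  induction k using Fin.cases with
  | zero => simpa [vec] using ha
  | succ j => simpa [vec] using ht j

private lemma statement7.vec_le {m : ℕ} (a : ℝ) (t y : Fin m → ℝ)
    (hty : ∀ i, t i ≤ y i) : ∀ k, vec a t k ≤ vec a y k := by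
  intro k
  induction k using Fin.cases with
  | zero => simp [vec]
  | succ j => simpa [vec] using hty j

private lemma statement7.term_diff_le {m : ℕ} (S : PosSystem m) (a : ℝ) (ha : 0 ≤ a)
    (t y : Fin m → ℝ) (ht : ∀ i, 0 ≤ t i) (hty : ∀ i, t i ≤ y i)
    (i : Fin m) (d : Fin (m + 1) → ℕ) :
    term S i (vec a y) d - term S i (vec a t) d ≤
      2⁻¹ * ∑ j, (jacTerm S i j (vec a t) d + jacTerm S i j (vec a y) d) * (y j - t j) := by
  have hu : ∀ k, 0 ≤ vec a t k := statement7.vec_nonneg a ha t ht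
  have huv : ∀ k, vec a t k ≤ vec a y k := statement7.vec_le a t y hty
  have key := prod_key (vec a t) (vec a y) d hu huv Finset.univ
  have hc := S.nonneg i d
  have main : 2 * (S.c i d * (∏ k, vec a y k ^ d k) - S.c i d * (∏ k, vec a t k ^ d k)) ≤
      ∑ j : Fin m, (S.c i d * (d j.succ : ℝ) *
          (∏ k, vec a t k ^ (if k = j.succ then d k - 1 else d k)) +
        S.c i d * (d j.succ : ℝ) *
          (∏ k, vec a y k ^ (if k = j.succ then d k - 1 else d k))) * (y j - t j) := by
    calc 2 * (S.c i d * (∏ k, vec a y k ^ d k) - S.c i d * (∏ k, vec a t k ^ d k))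
        = S.c i d * (2 * ((∏ k, vec a y k ^ d k) - ∏ k, vec a t k ^ d k)) := by ring
      _ ≤ S.c i d * ∑ k : Fin (m + 1), (d k : ℝ) * (vec a y k - vec a t k) *
            ((∏ l, vec a t l ^ (if l = k then d l - 1 else d l)) +
             (∏ l, vec a y l ^ (if l = k then d l - 1 else d l))) :=
          mul_le_mul_of_nonneg_left key hc
      _ = ∑ k : Fin (m + 1), S.c i d * ((d k : ℝ) * (vec a y k - vec a t k) *
            ((∏ l, vec a t l ^ (if l = k then d l - 1 else d l)) +
             (∏ l, vec a y l ^ (if l = k then d l - 1 else d l)))) := Finset.mul_sum _ _ _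
      _ = _ := by
          rw [Fin.sum_univ_succ]
          simp only [vec, Fin.cons_zero, Fin.cons_succ, sub_self, mul_zero, zero_mul,
            zero_add]
          exact Finset.sum_congr rfl fun j _ => by ring
  simp only [term, jacTerm]
  linarith [main]

/-- For `0 ≤ t ≤ y` with `(a,y) ∈ D(H)`,
`H(a,y) − H(a,t) ≤ ½(∂H/∂Y(a,t) + ∂H/∂Y(a,y))·(y−t)` componentwise in `[0,+∞]`. -/
theorem statement7 (m : ℕ) (hm : 1 ≤ m) (S : PosSystem m) (a : ℝ) (ha : 0 ≤ a)
    (t y : Fin m → ℝ) (ht : ∀ i, 0 ≤ t i) (hty : ∀ i, t i ≤ y i)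
    (hy : ConvAt S (vec a y)) :
    ∀ i, ENNReal.ofReal (Hval S (vec a y) i - Hval S (vec a t) i) ≤
      2⁻¹ * ∑ j, (jacEnn S (vec a t) i j + jacEnn S (vec a y) i j) *
        ENNReal.ofReal (y j - t j) := by
  intro i
  have hu : ∀ k, 0 ≤ vec a t k := statement7.vec_nonneg a ha t ht
  have huv : ∀ k, vec a t k ≤ vec a y k := statement7.vec_le a t y hty
  have hvnn : ∀ k, 0 ≤ vec a y k := fun k => (hu k).trans (huv k)
  have hfnn : ∀ d, 0 ≤ term S i (vec a y) d := fun d =>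
    mul_nonneg (S.nonneg i d) (Finset.prod_nonneg fun k _ => pow_nonneg (hvnn k) _)
  have hgnn : ∀ d, 0 ≤ term S i (vec a t) d := fun d =>
    mul_nonneg (S.nonneg i d) (Finset.prod_nonneg fun k _ => pow_nonneg (hu k) _)
  have hgf : ∀ d, term S i (vec a t) d ≤ term S i (vec a y) d := fun d =>
    mul_le_mul_of_nonneg_left (Finset.prod_le_prod
      (fun k _ => pow_nonneg (hu k) _)
      (fun k _ => pow_le_pow_left₀ (hu k) (huv k) _)) (S.nonneg i d)
  have hsf : Summable (term S i (vec a y)) := by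
    have := hy i; rwa [summable_abs_iff] at this
  have hsg : Summable (term S i (vec a t)) := hsf.of_nonneg_of_le hgnn hgf
  have hjt : ∀ j d, 0 ≤ jacTerm S i j (vec a t) d := fun j d =>
    mul_nonneg (mul_nonneg (S.nonneg i d) (Nat.cast_nonneg _))
      (Finset.prod_nonneg fun k _ => pow_nonneg (hu k) _)
  have hjy : ∀ j d, 0 ≤ jacTerm S i j (vec a y) d := fun j d =>
    mul_nonneg (mul_nonneg (S.nonneg i d) (Nat.cast_nonneg _))
      (Finset.prod_nonneg fun k _ => pow_nonneg (hvnn k) _)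
  have hd : Hval S (vec a y) i - Hval S (vec a t) i =
      ∑' d, (term S i (vec a y) d - term S i (vec a t) d) := (Summable.tsum_sub hsf hsg).symm
  rw [hd, ENNReal.ofReal_tsum_of_nonneg (fun d => sub_nonneg.2 (hgf d)) (hsf.sub hsg)]
  have h2 : ENNReal.ofReal ((2 : ℝ)⁻¹) = 2⁻¹ := by
    rw [ENNReal.ofReal_inv_of_pos two_pos]; norm_num
  have hB : ∀ d : Fin (m + 1) → ℕ, ENNReal.ofReal (2⁻¹ *
        ∑ j, (jacTerm S i j (vec a t) d + jacTerm S i j (vec a y) d) * (y j - t j)) =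
      2⁻¹ * ∑ j, (ENNReal.ofReal (jacTerm S i j (vec a t) d) +
        ENNReal.ofReal (jacTerm S i j (vec a y) d)) * ENNReal.ofReal (y j - t j) := by
    intro d
    rw [ENNReal.ofReal_mul (by norm_num), h2,
      ENNReal.ofReal_sum_of_nonneg (fun j _ => mul_nonneg
        (add_nonneg (hjt j d) (hjy j d)) (sub_nonneg.2 (hty j)))]
    congr 1
    exact Finset.sum_congr rfl fun j _ => by
      rw [ENNReal.ofReal_mul (add_nonneg (hjt j d) (hjy j d)),
        ENNReal.ofReal_add (hjt j d) (hjy j d)]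
  calc ∑' d, ENNReal.ofReal (term S i (vec a y) d - term S i (vec a t) d)
      ≤ ∑' d, ENNReal.ofReal (2⁻¹ *
          ∑ j, (jacTerm S i j (vec a t) d + jacTerm S i j (vec a y) d) * (y j - t j)) :=
        ENNReal.tsum_le_tsum fun d => ENNReal.ofReal_le_ofReal
          (statement7.term_diff_le S a ha t y ht hty i d)
    _ = ∑' d, 2⁻¹ * ∑ j, (ENNReal.ofReal (jacTerm S i j (vec a t) d) +
          ENNReal.ofReal (jacTerm S i j (vec a y) d)) * ENNReal.ofReal (y j - t j) :=
        tsum_congr hB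
    _ = 2⁻¹ * ∑' d, ∑ j, (ENNReal.ofReal (jacTerm S i j (vec a t) d) +
          ENNReal.ofReal (jacTerm S i j (vec a y) d)) * ENNReal.ofReal (y j - t j) :=
        ENNReal.tsum_mul_left
    _ = 2⁻¹ * ∑ j, ∑' d, (ENNReal.ofReal (jacTerm S i j (vec a t) d) +
          ENNReal.ofReal (jacTerm S i j (vec a y) d)) * ENNReal.ofReal (y j - t j) := by
        rw [Summable.tsum_finsetSum fun j _ => ENNReal.summable]
    _ = 2⁻¹ * ∑ j, (jacEnn S (vec a t) i j + jacEnn S (vec a y) i j) *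
          ENNReal.ofReal (y j - t j) := by
        congr 1
        refine Finset.sum_congr rfl fun j _ => ?_
        rw [ENNReal.tsum_mul_right, ENNReal.tsum_add]
        rfl

end AnalyticComb
end
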